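/- arXiv:1908.03808 — 5 statements merged into one kernel-verified Lean document; each statement's English description precedes it below -/
import Mathlib

section
/- Upper bound for the transformed equation: Let n ≥ 2 be an integer, λᵢ ≥ 0, and let h : [0,∞) → ℝ be positive and nondecreasing. There exists r₁ ≥ 2 such that the following holds for every r₀ ≥ r₁. Let t : [2,∞) → ℝ be continuous and differentiable on [r₀,∞), and let g : [r₀,∞) → ℝ satisfy |g(r)| ≤ (2/(n−1)) (h(r)/(1+r)) e^{(n−1)r} for all r ≥ r₀. Suppose that for every r ≥ r₀, t'(r) + ((n−1)/2) t(r)² e^{−(n−1)r} + (2λᵢ/(n−1)) e^{(n−1)r} / exp(∫₂^r 2(1 + t(x) e^{−(n−1)x}) dx) = g(r). Then for all r ≥ r₀, t(r) ≤ t(r₀) + 6 (h(r)/(1+r)) e^{(n−1)r}. -/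
open Set Real

/- The other two terms of the equation are nonnegative, so on [r₀, r] we have
t' ≤ |g| ≤ (2/c) h(r) e^{cx}/(1+x), where c = n - 1 and h is monotone. For c ≥ 1 and x ≥ 2 the
derivative of e^{cx}/(1+x) is at least (2c/3) e^{cx}/(1+x), so (3 h(r)/c²) e^{cx}/(1+x) is an
upper barrier for t - t(r₀) on [r₀, r]. -/

theorem le_add_of_hasDerivAt_le {f f' G G' : ℝ → ℝ} {a b : ℝ} (hab : a ≤ b)
    (hf : ∀ x ∈ Icc a b, HasDerivAt f (f' x) x) (hG : ∀ x ∈ Icc a b, HasDerivAt G (G' x) x)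
    (hle : ∀ x ∈ Icc a b, f' x ≤ G' x) (hGa : 0 ≤ G a) : f b ≤ f a + G b := by
  have hcont {φ φ' : ℝ → ℝ} (hφ : ∀ x ∈ Icc a b, HasDerivAt φ (φ' x) x) :
      ContinuousOn φ (Icc a b) := fun x hx => (hφ x hx).continuousAt.continuousWithinAt
  refine image_le_of_deriv_right_le_deriv_boundary (B := fun x => f a + G x) (hcont hf)
    (fun x hx => (hf x (Ico_subset_Icc_self hx)).hasDerivWithinAt) (le_add_of_nonneg_right hGa)
    (continuousOn_const.add (hcont hG))
    (fun x hx => ((hG x (Ico_subset_Icc_self hx)).const_add (f a)).hasDerivWithinAt)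
    (fun x hx => hle x (Ico_subset_Icc_self hx)) ⟨hab, le_rfl⟩

theorem hasDerivAt_exp_mul_div_one_add (c : ℝ) {x : ℝ} (hx : 1 + x ≠ 0) :
    HasDerivAt (fun y => exp (c * y) / (1 + y))
      (exp (c * x) * (c * (1 + x) - 1) / (1 + x) ^ 2) x := by
  have hexp : HasDerivAt (fun y => exp (c * y)) (exp (c * x) * c) x :=
    ((hasDerivAt_id x).const_mul c).exp.congr_deriv (by simp)
  exact (hexp.div ((hasDerivAt_id' x).const_add 1) hx).congr_deriv (by ring)

theorem div_mul_exp_le_mul_deriv_exp_mul_div_one_add {c x K : ℝ} (hc : 1 ≤ c) (hx : 2 ≤ x)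
    (hK : 0 ≤ K) :
    2 / c * (K / (1 + x)) * exp (c * x) ≤
      3 * K / c ^ 2 * (exp (c * x) * (c * (1 + x) - 1) / (1 + x) ^ 2) := by
  have hx1 : 0 < 1 + x := by linarith
  have hcx : 2 * c / 3 * (1 + x) ≤ c * (1 + x) - 1 := by nlinarith
  calc 2 / c * (K / (1 + x)) * exp (c * x)
      = 3 * K / c ^ 2 * (exp (c * x) * (2 * c / 3 * (1 + x)) / (1 + x) ^ 2) := by field_simp
    _ ≤ 3 * K / c ^ 2 * (exp (c * x) * (c * (1 + x) - 1) / (1 + x) ^ 2) := by gcongr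

/-- Upper bound for solutions of the transformed equation
(inequality (3.10) in the proof of Lemma 4.1). -/
theorem stmt3 (n : ℕ) (hn : 2 ≤ n) (lamI : ℝ) (hlam : 0 ≤ lamI) (h : ℝ → ℝ)
    (hpos : ∀ x, 0 ≤ x → 0 < h x) (hmono : MonotoneOn h (Ici 0)) :
    ∃ r₁, 2 ≤ r₁ ∧ ∀ r₀ : ℝ, r₁ ≤ r₀ → ∀ t t' g : ℝ → ℝ,
      ContinuousOn t (Ici 2) →
      (∀ r, r₀ ≤ r → HasDerivAt t (t' r) r) →
      (∀ r, r₀ ≤ r →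
        |g r| ≤ 2 / ((n : ℝ) - 1) * (h r / (1 + r)) * Real.exp (((n : ℝ) - 1) * r)) →
      (∀ r, r₀ ≤ r →
        t' r + ((n : ℝ) - 1) / 2 * (t r) ^ 2 * Real.exp (-((n : ℝ) - 1) * r)
          + 2 * lamI / ((n : ℝ) - 1) * Real.exp (((n : ℝ) - 1) * r) /
            Real.exp (∫ x in (2 : ℝ)..r, 2 * (1 + t x * Real.exp (-((n : ℝ) - 1) * x)))
          = g r) →
      ∀ r, r₀ ≤ r → t r ≤ t r₀ + 6 * (h r / (1 + r)) * Real.exp (((n : ℝ) - 1) * r) := by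
  refine ⟨2, le_rfl, fun r₀ hr₀ t t' g _ ht hg heq r hr => ?_⟩
  set c : ℝ := (n : ℝ) - 1
  have hc : 1 ≤ c := by
    have : (2 : ℝ) ≤ n := by exact_mod_cast hn
    linarith
  have hhr : 0 ≤ h r := (hpos r (by linarith)).le
  have ht'_le : ∀ x ∈ Icc r₀ r, t' x ≤ 3 * h r / c ^ 2 *
      (exp (c * x) * (c * (1 + x) - 1) / (1 + x) ^ 2) := by
    intro x ⟨hx₀, hxr⟩
    have ht'_le_g : t' x ≤ |g x| := by
      have := heq x hx₀
      have : 0 ≤ c / 2 * t x ^ 2 * exp (-c * x) := by positivity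
      have : 0 ≤ 2 * lamI / c * exp (c * x) /
          exp (∫ y in (2 : ℝ)..x, 2 * (1 + t y * exp (-c * y))) := by positivity
      linarith [le_abs_self (g x)]
    have hhx : h x ≤ h r := hmono (by simp; linarith) (by simp; linarith) hxr
    have hx1 : 0 < 1 + x := by linarith
    calc t' x ≤ 2 / c * (h x / (1 + x)) * exp (c * x) := ht'_le_g.trans (hg x hx₀)
      _ ≤ 2 / c * (h r / (1 + x)) * exp (c * x) := by gcongr
      _ ≤ _ := div_mul_exp_le_mul_deriv_exp_mul_div_one_add hc (by linarith) hhr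
  have hr₀1 : 0 < 1 + r₀ := by linarith
  have hr1 : 0 < 1 + r := by linarith
  have hbarrier := le_add_of_hasDerivAt_le hr (fun x hx => ht x hx.1)
    (fun x hx => (hasDerivAt_exp_mul_div_one_add c (by linarith [hx.1])).const_mul _)
    ht'_le (by positivity)
  have hconst : 3 * h r / c ^ 2 ≤ 6 * h r :=
    (div_le_self (by positivity) (one_le_pow₀ hc)).trans (by linarith)
  calc t r ≤ t r₀ + 3 * h r / c ^ 2 * (exp (c * r) / (1 + r)) := hbarrier
    _ ≤ t r₀ + 6 * h r * (exp (c * r) / (1 + r)) := by gcongr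
    _ = t r₀ + 6 * (h r / (1 + r)) * exp (c * r) := by ring
end

section
/- Two-sided bound for the transformed equation: Let n ≥ 2 be an integer, λᵢ ≥ 0, and let h : [0,∞) → ℝ be positive and nondecreasing with h(x) ≤ 1 + x^{1/10} for all x ≥ 0. There exists r₁ ≥ 2 such that the following holds for every r₀ ≥ r₁. Let t : [2,∞) → ℝ be continuous and differentiable on [r₀,∞) with t(x) ≥ 0 for 2 ≤ x ≤ r₀, and let g : [r₀,∞) → ℝ satisfy |g(r)| ≤ (2/(n−1)) (h(r)/(1+r)) e^{(n−1)r} for all r ≥ r₀. Suppose that for every r ≥ r₀, t'(r) + ((n−1)/2) t(r)² e^{−(n−1)r} + (2λᵢ/(n−1)) e^{(n−1)r} / exp(∫₂^r 2(1 + t(x) e^{−(n−1)x}) dx) = g(r). Then for all r ≥ r₀, |t(r)| ≤ t(r₀) + 10 (h(r)/(1+r)) e^{(n−1)r}. -/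
/-!
Write `ν = n - 1` and `φ(x) = e^{νx}/(1+x)` (`expDivPow ν 1`), so that `|g| ≤ 2 h φ` and
`φ' ≥ (ν/2) φ`. Dropping the two nonnegative terms of the equation gives
`t' ≤ 2 h(R) φ ≤ 4 h(R) φ'` on `[r₀, R]`, whence `t(R) ≤ t(r₀) + 4 h(R) φ(R)`.

For the lower bound `t ≥ -10 h φ`, suppose it fails and let `c` be the first point where it
does, and `ρ ≤ c` the last point of `[r₀, c]` with `t(ρ) ≥ 0`. Before `c` the lower barrier
makes `t e^{-νx} ≥ -1/10`, so the integral in the equation is at least `x` and the `λ`-term is at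
most `2λ e^{(ν-1)x}`; on `(ρ, c)` also `t² e^{-νx} ≤ 100 h(c)² e^{νx}/(1+x)²`. Hence
`t + V` is nondecreasing on `[ρ, c]` for the explicit `barrier` `V`, which gives
`0 ≤ t(c) + V(c) ≤ -10 h(c) φ(c) + 6 h(c) φ(c) < 0` once `r₁` is so large that
`100 h(x) ≤ 1 + x` and `2λ x (1 + x) ≤ h(0) e^x` beyond it.
-/

open Set Filter Real

noncomputable def expDivPow (ν : ℝ) (k : ℕ) (x : ℝ) : ℝ := exp (ν * x) / (1 + x) ^ k

lemma expDivPow_pos (ν : ℝ) (k : ℕ) {x : ℝ} (hx : -1 < x) : 0 < expDivPow ν k x := by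
  unfold expDivPow
  have : 0 < 1 + x := by linarith
  positivity

lemma hasDerivAt_expDivPow (ν : ℝ) (k : ℕ) {x : ℝ} (hx : 1 + x ≠ 0) :
    HasDerivAt (expDivPow ν k) ((ν - k / (1 + x)) * expDivPow ν k x) x := by
  have hexp : HasDerivAt (fun y => exp (ν * y)) (exp (ν * x) * ν) x :=
    ((hasDerivAt_id x).const_mul ν).exp.congr_deriv (by simp)
  have hpow : HasDerivAt (fun y => (1 + y) ^ k) (k * (1 + x) ^ (k - 1)) x := by
    simpa using ((hasDerivAt_id x).const_add 1).fun_pow k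
  refine (hexp.fun_div hpow (pow_ne_zero k hx)).congr_deriv ?_
  rw [expDivPow]
  rcases k with _ | k
  · simp [mul_comm]
  · rw [Nat.add_sub_cancel]
    field_simp
    ring

lemma half_mul_le_deriv_expDivPow {ν : ℝ} {k : ℕ} {x : ℝ} (hx : -1 < x)
    (hk : 2 * k ≤ ν * (1 + x)) :
    ν / 2 * expDivPow ν k x ≤ (ν - k / (1 + x)) * expDivPow ν k x := by
  have h1x : 0 < 1 + x := by linarith
  refine mul_le_mul_of_nonneg_right ?_ (expDivPow_pos ν k hx).le
  have : (k : ℝ) / (1 + x) ≤ ν / 2 := by rw [div_le_div_iff₀ h1x two_pos]; linarith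
  linarith

lemma le_of_hasDerivAt_nonneg {f f' : ℝ → ℝ} {a b : ℝ} (hab : a ≤ b)
    (hf : ∀ x ∈ Icc a b, HasDerivAt f (f' x) x) (hf' : ∀ x ∈ Ioo a b, 0 ≤ f' x) :
    f a ≤ f b := by
  refine monotoneOn_of_hasDerivWithinAt_nonneg (f' := f') (convex_Icc a b)
    (fun x hx => (hf x hx).continuousAt.continuousWithinAt) (fun x hx => ?_) (fun x hx => ?_)
    ⟨le_rfl, hab⟩ ⟨hab, le_rfl⟩ hab <;> rw [interior_Icc] at hx
  · exact (hf x (Ioo_subset_Icc_self hx)).hasDerivWithinAt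
  · exact hf' x hx

lemma expDivPow_monotoneOn {ν : ℝ} (hν : 1 ≤ ν) : MonotoneOn (expDivPow ν 1) (Ici 0) := by
  intro a ha b hb hab
  refine le_of_hasDerivAt_nonneg hab
    (fun x hx => hasDerivAt_expDivPow ν 1 (by linarith [hx.1, mem_Ici.1 ha])) (fun x hx => ?_)
  have hx0 : 0 < x := lt_of_le_of_lt (mem_Ici.1 ha) hx.1
  have : (1 : ℝ) / (1 + x) ≤ 1 := (div_le_one (by linarith)).2 (by linarith)
  exact mul_nonneg (by push_cast; linarith) (expDivPow_pos ν 1 (by linarith)).le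

lemma expDivPow_mul_exp_neg (ν : ℝ) (k : ℕ) (x : ℝ) :
    expDivPow ν k x * exp (-ν * x) = 1 / (1 + x) ^ k := by
  rw [expDivPow, neg_mul, exp_neg]
  field_simp

lemma expDivPow_sq_mul_exp_neg (ν x : ℝ) :
    expDivPow ν 1 x ^ 2 * exp (-ν * x) = expDivPow ν 2 x := by
  rw [expDivPow, expDivPow, neg_mul, exp_neg]
  field_simp

lemma expDivPow_two (ν : ℝ) {x : ℝ} : expDivPow ν 2 x = expDivPow ν 1 x / (1 + x) := by
  rw [expDivPow, expDivPow]
  field_simp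

lemma exists_first_le_of_antitoneOn {t u : ℝ → ℝ} {a b : ℝ} (hab : a ≤ b)
    (ht : ContinuousOn t (Icc a b)) (hu : AntitoneOn u (Icc a b)) (hb : t b ≤ u b) :
    ∃ c ∈ Icc a b, t c ≤ u c ∧ ∀ x ∈ Ico a c, u x < t x := by
  set B := {x ∈ Icc a b | t x ≤ u x}
  have hbB : b ∈ B := ⟨⟨hab, le_rfl⟩, hb⟩
  have hBbdd : BddBelow B := ⟨a, fun x hx => hx.1.1⟩
  have hcB : sInf B ∈ Icc a b :=
    ⟨le_csInf ⟨b, hbB⟩ fun x hx => hx.1.1, csInf_le hBbdd hbB⟩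
  have hclosed : IsClosed (Icc a b ∩ t ⁻¹' Iic (u (sInf B))) :=
    ht.preimage_isClosed_of_isClosed isClosed_Icc isClosed_Iic
  have hsub : B ⊆ Icc a b ∩ t ⁻¹' Iic (u (sInf B)) := fun x hx =>
    ⟨hx.1, hx.2.trans (hu hcB hx.1 (csInf_le hBbdd hx))⟩
  refine ⟨sInf B, hcB, (hclosed.closure_subset_iff.2 hsub (csInf_mem_closure ⟨b, hbB⟩ hBbdd)).2,
    fun x hx => lt_of_not_ge fun hxB => ?_⟩
  exact hx.2.not_ge (csInf_le hBbdd ⟨⟨hx.1, hx.2.le.trans hcB.2⟩, hxB⟩)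

lemma exists_last_nonneg {t : ℝ → ℝ} {a b : ℝ} (hab : a ≤ b) (ht : ContinuousOn t (Icc a b))
    (ha : 0 ≤ t a) : ∃ ρ ∈ Icc a b, 0 ≤ t ρ ∧ ∀ x ∈ Ioc ρ b, t x < 0 := by
  set Z := Icc a b ∩ t ⁻¹' Ici 0
  have haZ : a ∈ Z := ⟨⟨le_rfl, hab⟩, ha⟩
  have hZbdd : BddAbove Z := ⟨b, fun x hx => hx.1.2⟩
  have hρ : sSup Z ∈ Z :=
    (ht.preimage_isClosed_of_isClosed isClosed_Icc isClosed_Ici).csSup_mem ⟨a, haZ⟩ hZbdd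
  refine ⟨sSup Z, hρ.1, hρ.2, fun x hx => lt_of_not_ge fun hxZ => ?_⟩
  exact hx.1.not_ge (le_csSup hZbdd ⟨⟨hρ.1.1.trans hx.1.le, hx.2⟩, hxZ⟩)

lemma upper_bound_of_deriv_le {ν r₀ R : ℝ} {h t t' : ℝ → ℝ} (hν : 1 ≤ ν) (hr₀ : 1 ≤ r₀)
    (hpos : ∀ x, 0 ≤ x → 0 < h x) (hmono : MonotoneOn h (Ici 0))
    (htd : ∀ x, r₀ ≤ x → HasDerivAt t (t' x) x)
    (ht' : ∀ x, r₀ ≤ x → t' x ≤ 2 * h x * expDivPow ν 1 x) (hR : r₀ ≤ R) :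
    t R ≤ t r₀ + 4 * h R * expDivPow ν 1 R := by
  have hhR : 0 < h R := hpos R (by linarith)
  have hcomp : 4 * h R * expDivPow ν 1 r₀ - t r₀ ≤ 4 * h R * expDivPow ν 1 R - t R := by
    refine le_of_hasDerivAt_nonneg hR (fun x hx => ((hasDerivAt_expDivPow ν 1
      (by linarith [hx.1])).const_mul (4 * h R)).sub (htd x hx.1)) (fun x hx => ?_)
    have hx1 : -1 < x := by linarith [hx.1]
    have hφ := expDivPow_pos ν 1 hx1
    have hhx : h x ≤ h R :=
      hmono (mem_Ici.2 (by linarith [hx.1])) (mem_Ici.2 (by linarith)) hx.2.le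
    have hderiv :=
      half_mul_le_deriv_expDivPow (ν := ν) (k := 1) hx1 (by push_cast; nlinarith [hx.1])
    have hνφ : expDivPow ν 1 x ≤ ν * expDivPow ν 1 x := le_mul_of_one_le_left hφ.le hν
    nlinarith [ht' x hx.1.le, mul_le_mul_of_nonneg_right hhx hφ.le,
      mul_le_mul_of_nonneg_left hderiv hhR.le]
  nlinarith [expDivPow_pos ν 1 (show -1 < r₀ by linarith)]

noncomputable def barrier (ν lam H x : ℝ) : ℝ :=
  4 * H * expDivPow ν 1 x + 100 * H ^ 2 * expDivPow ν 2 x + 2 * lam * (x * exp ((ν - 1) * x))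

lemma barrier_nonneg {ν lam H x : ℝ} (hlam : 0 ≤ lam) (hH : 0 ≤ H) (hx : 0 ≤ x) :
    0 ≤ barrier ν lam H x := by
  have := expDivPow_pos ν 1 (show -1 < x by linarith)
  have := expDivPow_pos ν 2 (show -1 < x by linarith)
  unfold barrier
  positivity

lemma barrier_le {ν lam H c : ℝ} (hc : 0 ≤ c) (hH : 100 * H ≤ 1 + c)
    (hlam : 2 * lam * c * (1 + c) ≤ H * exp c) (hH0 : 0 ≤ H) :
    barrier ν lam H c ≤ 6 * H * expDivPow ν 1 c := by
  have h1c : 0 < 1 + c := by linarith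
  have hφ := expDivPow_pos ν 1 (show -1 < c by linarith)
  have hquad : 100 * H ^ 2 * expDivPow ν 2 c ≤ H * expDivPow ν 1 c := by
    rw [expDivPow_two, show 100 * H ^ 2 * (expDivPow ν 1 c / (1 + c))
      = H * expDivPow ν 1 c * (100 * H / (1 + c)) by ring]
    exact mul_le_of_le_one_right (by positivity) ((div_le_one h1c).2 hH)
  have hlin : 2 * lam * (c * exp ((ν - 1) * c)) ≤ H * expDivPow ν 1 c := by
    rw [expDivPow, pow_one, ← mul_div_assoc, le_div_iff₀ h1c,
      show ν * c = c + (ν - 1) * c by ring, exp_add]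
    nlinarith [exp_pos ((ν - 1) * c)]
  unfold barrier
  linarith

lemma exists_hasDerivAt_barrier_ge {ν lam H x : ℝ} (hν : 1 ≤ ν) (hlam : 0 ≤ lam) (hH : 0 ≤ H)
    (hx : 3 ≤ x) : ∃ V', HasDerivAt (barrier ν lam H) V' x ∧
      2 * H * expDivPow ν 1 x + 50 * ν * H ^ 2 * expDivPow ν 2 x
        + 2 * lam * exp ((ν - 1) * x) ≤ V' := by
  have hx1 : -1 < x := by linarith
  have hlin : HasDerivAt (fun y => y * exp ((ν - 1) * y))
      (exp ((ν - 1) * x) + x * (exp ((ν - 1) * x) * (ν - 1))) x := by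
    simpa using (hasDerivAt_id x).fun_mul ((hasDerivAt_id x).const_mul (ν - 1)).exp
  refine ⟨_, ((((hasDerivAt_expDivPow ν 1 (by linarith)).const_mul (4 * H)).add
    ((hasDerivAt_expDivPow ν 2 (by linarith)).const_mul (100 * H ^ 2))).add
    (hlin.const_mul (2 * lam))), ?_⟩
  have h1 := half_mul_le_deriv_expDivPow (ν := ν) (k := 1) hx1 (by push_cast; nlinarith)
  have h2 := half_mul_le_deriv_expDivPow (ν := ν) (k := 2) hx1 (by push_cast; nlinarith)
  have hφ := expDivPow_pos ν 1 hx1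
  have hνφ : expDivPow ν 1 x ≤ ν * expDivPow ν 1 x := le_mul_of_one_le_left hφ.le hν
  have hexp : 0 ≤ x * (exp ((ν - 1) * x) * (ν - 1)) := by
    have := exp_pos ((ν - 1) * x)
    have : 0 ≤ ν - 1 := by linarith
    positivity
  nlinarith [mul_le_mul_of_nonneg_left h1 hH, mul_le_mul_of_nonneg_left h2 (sq_nonneg H)]

lemma lower_bound_of_deriv_ge {ν lam r₀ R : ℝ} {h t t' : ℝ → ℝ} (hν : 1 ≤ ν) (hlam : 0 ≤ lam)
    (hr₀ : 3 ≤ r₀) (hpos : ∀ x, 0 ≤ x → 0 < h x) (hmono : MonotoneOn h (Ici 0))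
    (hh : ∀ x, r₀ ≤ x → 100 * h x ≤ 1 + x)
    (hlamx : ∀ x, r₀ ≤ x → 2 * lam * x * (1 + x) ≤ h 0 * exp x)
    (htd : ∀ x, r₀ ≤ x → HasDerivAt t (t' x) x) (ht₀ : 0 ≤ t r₀)
    (ht' : ∀ x, r₀ ≤ x → (∀ y ∈ Icc r₀ x, -(10 * h y * expDivPow ν 1 y) ≤ t y) →
      -(2 * h x * expDivPow ν 1 x) - ν / 2 * t x ^ 2 * exp (-ν * x)
        - 2 * lam * exp ((ν - 1) * x) ≤ t' x)
    (hR : r₀ ≤ R) : -(10 * h R * expDivPow ν 1 R) < t R := by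
  by_contra! hcross
  have htc : ContinuousOn t (Ici r₀) := fun x hx => (htd x hx).continuousAt.continuousWithinAt
  have hanti : AntitoneOn (fun x => -(10 * h x * expDivPow ν 1 x)) (Icc r₀ R) := by
    intro a ha b hb hab
    have ha0 : a ∈ Ici 0 := mem_Ici.2 (by linarith [ha.1])
    have hb0 : b ∈ Ici 0 := mem_Ici.2 (by linarith [hb.1])
    have := mul_le_mul (hmono ha0 hb0 hab) (expDivPow_monotoneOn hν ha0 hb0 hab)
      (expDivPow_pos ν 1 (by linarith [ha.1])).le (hpos b hb0).le
    simp only [neg_le_neg_iff]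
    linarith
  obtain ⟨c, ⟨hr₀c, hcR⟩, htc_le, habove⟩ :=
    exists_first_le_of_antitoneOn hR (htc.mono Icc_subset_Ici_self) hanti hcross
  obtain ⟨ρ, ⟨hr₀ρ, hρc⟩, htρ, hneg⟩ :=
    exists_last_nonneg hr₀c (htc.mono Icc_subset_Ici_self) ht₀
  set H := h c
  have hH : 0 < H := hpos c (by linarith)
  have hV : ∀ x ∈ Icc ρ c, ∃ V', HasDerivAt (barrier ν lam H) V' x ∧
      2 * H * expDivPow ν 1 x + 50 * ν * H ^ 2 * expDivPow ν 2 x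
        + 2 * lam * exp ((ν - 1) * x) ≤ V' :=
    fun x hx => exists_hasDerivAt_barrier_ge hν hlam hH.le (by linarith [hx.1])
  choose! V' hV' hV'ge using hV
  have hcomp : t ρ + barrier ν lam H ρ ≤ t c + barrier ν lam H c := by
    refine le_of_hasDerivAt_nonneg (f := fun x => t x + barrier ν lam H x)
      (f' := fun x => t' x + V' x) hρc
      (fun x hx => (htd x (hr₀ρ.trans hx.1)).add (hV' x hx)) (fun x hx => ?_)
    have hx0 : 0 ≤ x := by linarith [hx.1]
    have hφ := expDivPow_pos ν 1 (show -1 < x by linarith)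
    have hhx : h x ≤ H := hmono (mem_Ici.2 hx0) (mem_Ici.2 (by linarith)) hx.2.le
    have htx_lt : t x < 0 := hneg x ⟨hx.1, hx.2.le⟩
    have htx_gt : -(10 * h x * expDivPow ν 1 x) < t x := habove x ⟨hr₀ρ.trans hx.1.le, hx.2⟩
    have hhφ : h x * expDivPow ν 1 x ≤ H * expDivPow ν 1 x :=
      mul_le_mul_of_nonneg_right hhx hφ.le
    have hquad : ν / 2 * t x ^ 2 * exp (-ν * x) ≤ 50 * ν * H ^ 2 * expDivPow ν 2 x := by
      have hsq : t x ^ 2 ≤ (10 * H * expDivPow ν 1 x) ^ 2 := by nlinarith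
      rw [← expDivPow_sq_mul_exp_neg]
      have := mul_le_mul_of_nonneg_left hsq (show 0 ≤ ν / 2 * exp (-ν * x) by positivity)
      linarith
    have := ht' x (hr₀ρ.trans hx.1.le) fun y hy => (habove y ⟨hy.1, hy.2.trans_lt hx.2⟩).le
    have := hV'ge x (Ioo_subset_Icc_self hx)
    linarith
  have hh0c : h 0 ≤ H := hmono (mem_Ici.2 le_rfl) (mem_Ici.2 (by linarith)) (by linarith)
  have := barrier_nonneg (ν := ν) hlam hH.le (show 0 ≤ ρ by linarith)
  have := barrier_le (ν := ν) (show 0 ≤ c by linarith) (hh c hr₀c)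
    ((hlamx c hr₀c).trans (mul_le_mul_of_nonneg_right hh0c (exp_pos c).le)) hH.le
  have := expDivPow_pos ν 1 (show -1 < c by linarith)
  nlinarith

lemma eventually_hundred_mul_le_one_add {h : ℝ → ℝ}
    (hgrow : ∀ x, 0 ≤ x → h x ≤ 1 + x ^ ((1 : ℝ) / 10)) : ∀ᶠ x in atTop, 100 * h x ≤ 1 + x := by
  filter_upwards [(tendsto_rpow_neg_atTop (y := 9 / 10) (by norm_num)).eventually
    (eventually_le_nhds (show (0 : ℝ) < 1 / 200 by norm_num)), eventually_ge_atTop 200]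
    with x hx9 hx
  have hroot : x ^ ((1 : ℝ) / 10) = x * x ^ (-(9 / 10 : ℝ)) := by
    rw [← rpow_one_add' (by linarith) (by norm_num)]
    norm_num
  nlinarith [hgrow x (by linarith)]

lemma eventually_mul_le_mul_exp (c : ℝ) {ε : ℝ} (hε : 0 < ε) :
    ∀ᶠ x in atTop, c * x * (1 + x) ≤ ε * exp x := by
  have hpoly : (fun x : ℝ => c * x ^ 1 + c * x ^ 2) =o[atTop] exp :=
    (isLittleO_pow_exp_atTop.const_mul_left c).add (isLittleO_pow_exp_atTop.const_mul_left c)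
  filter_upwards [hpoly.bound hε] with x hx
  rw [Real.norm_eq_abs, Real.norm_eq_abs, abs_exp] at hx
  nlinarith [le_abs_self (c * x ^ 1 + c * x ^ 2)]

lemma mul_sub_le_integral_of_le {f : ℝ → ℝ} {a b m : ℝ} (hab : a ≤ b)
    (hf : ContinuousOn f (Icc a b)) (hm : ∀ y ∈ Icc a b, m ≤ f y) :
    m * (b - a) ≤ ∫ y in a..b, f y := by
  simpa [mul_comm] using intervalIntegral.integral_mono_on hab intervalIntegrable_const
    (hf.intervalIntegrable_of_Icc (μ := MeasureTheory.volume) hab) hm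

lemma le_integral_two_mul_one_add {ν r₀ x : ℝ} {h t : ℝ → ℝ} (hx5 : 5 ≤ x)
    (htc : ContinuousOn t (Ici 2)) (ht₀ : ∀ y, 2 ≤ y → y ≤ r₀ → 0 ≤ t y)
    (hh : ∀ y ∈ Icc r₀ x, 100 * h y ≤ 1 + y)
    (ht : ∀ y ∈ Icc r₀ x, -(10 * h y * expDivPow ν 1 y) ≤ t y) :
    x ≤ ∫ y in (2 : ℝ)..x, 2 * (1 + t y * exp (-ν * y)) := by
  have htx : ContinuousOn t (Icc 2 x) := htc.mono Icc_subset_Ici_self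
  calc x ≤ 9 / 5 * (x - 2) := by linarith
    _ ≤ _ := mul_sub_le_integral_of_le (by linarith) (by fun_prop) fun y hy => ?_
  rcases le_total y r₀ with hyr | hyr
  · nlinarith [ht₀ y hy.1 hyr, exp_pos (-ν * y)]
  · have h1y : 0 < 1 + y := by linarith [hy.1]
    have hty := mul_le_mul_of_nonneg_right (ht y ⟨hyr, hy.2⟩) (exp_pos (-ν * y)).le
    rw [neg_mul, mul_assoc, expDivPow_mul_exp_neg, pow_one] at hty
    have : 10 * h y * (1 / (1 + y)) ≤ 1 / 10 := by
      rw [mul_one_div, div_le_iff₀ h1y]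
      linarith [hh y ⟨hyr, hy.2⟩]
    linarith

lemma div_exp_le_of_le_integral {ν lam x I : ℝ} (hν : 1 ≤ ν) (hlam : 0 ≤ lam) (hI : x ≤ I) :
    2 * lam / ν * exp (ν * x) / exp I ≤ 2 * lam * exp ((ν - 1) * x) := by
  rw [div_le_iff₀ (exp_pos I), show ν * x = (ν - 1) * x + x by ring, exp_add]
  have h1 : 2 * lam / ν ≤ 2 * lam := div_le_self (by linarith) hν
  have h2 : exp x ≤ exp I := exp_le_exp.2 hI
  have := exp_pos ((ν - 1) * x)
  have := exp_pos x
  calc 2 * lam / ν * (exp ((ν - 1) * x) * exp x)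
      ≤ 2 * lam * (exp ((ν - 1) * x) * exp I) := by gcongr
    _ = _ := by ring

lemma abs_le_two_mul_expDivPow {ν x a b : ℝ} (hν : 1 ≤ ν) (hx : -1 < x) (ha : 0 ≤ a)
    (hb : |b| ≤ 2 / ν * (a / (1 + x)) * exp (ν * x)) : |b| ≤ 2 * a * expDivPow ν 1 x := by
  rw [mul_assoc, show a / (1 + x) * exp (ν * x) = a * expDivPow ν 1 x by
    rw [expDivPow, pow_one]; ring] at hb
  have := mul_nonneg ha (expDivPow_pos ν 1 hx).le
  linarith [mul_le_mul_of_nonneg_right (div_le_self two_pos.le hν) this]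

/-- Two-sided bound for solutions of the transformed equation
(inequality (3.14) in the proof of Lemma 4.1). -/
theorem stmt4 (n : ℕ) (hn : 2 ≤ n) (lamI : ℝ) (hlam : 0 ≤ lamI) (h : ℝ → ℝ)
    (hpos : ∀ x, 0 ≤ x → 0 < h x) (hmono : MonotoneOn h (Ici 0))
    (hgrow : ∀ x, 0 ≤ x → h x ≤ 1 + x ^ ((1 : ℝ) / 10)) :
    ∃ r₁, 2 ≤ r₁ ∧ ∀ r₀ : ℝ, r₁ ≤ r₀ → ∀ t t' g : ℝ → ℝ,
      ContinuousOn t (Ici 2) →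
      (∀ r, r₀ ≤ r → HasDerivAt t (t' r) r) →
      (∀ x, 2 ≤ x → x ≤ r₀ → 0 ≤ t x) →
      (∀ r, r₀ ≤ r →
        |g r| ≤ 2 / ((n : ℝ) - 1) * (h r / (1 + r)) * Real.exp (((n : ℝ) - 1) * r)) →
      (∀ r, r₀ ≤ r →
        t' r + ((n : ℝ) - 1) / 2 * (t r) ^ 2 * Real.exp (-((n : ℝ) - 1) * r)
          + 2 * lamI / ((n : ℝ) - 1) * Real.exp (((n : ℝ) - 1) * r) /
            Real.exp (∫ x in (2 : ℝ)..r, 2 * (1 + t x * Real.exp (-((n : ℝ) - 1) * x)))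
          = g r) →
      ∀ r, r₀ ≤ r → |t r| ≤ t r₀ + 10 * (h r / (1 + r)) * Real.exp (((n : ℝ) - 1) * r) := by
  set ν : ℝ := (n : ℝ) - 1
  have hν : 1 ≤ ν := by
    have : (2 : ℝ) ≤ n := by exact_mod_cast hn
    linarith
  obtain ⟨r₁, hr₁⟩ := eventually_atTop.1 ((eventually_hundred_mul_le_one_add hgrow).and
    ((eventually_mul_le_mul_exp (2 * lamI) (hpos 0 le_rfl)).and (eventually_ge_atTop 5)))
  refine ⟨r₁, by linarith [(hr₁ r₁ le_rfl).2.2], fun r₀ hr₀ t t' g htc htd ht₀ hg hode => ?_⟩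
  have hlarge : ∀ x, r₀ ≤ x → _ := fun x hx => hr₁ x (hr₀.trans hx)
  have hgφ : ∀ x, r₀ ≤ x → |g x| ≤ 2 * h x * expDivPow ν 1 x := fun x hx => by
    have hx5 := (hlarge x hx).2.2
    exact abs_le_two_mul_expDivPow hν (by linarith) (hpos x (by linarith)).le (hg x hx)
  have hup : ∀ x, r₀ ≤ x → t' x ≤ 2 * h x * expDivPow ν 1 x := fun x hx => by
    have hQ : 0 ≤ ν / 2 * t x ^ 2 * exp (-ν * x) :=
      mul_nonneg (mul_nonneg (by linarith) (sq_nonneg _)) (exp_pos _).le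
    have hL : 0 ≤ 2 * lamI / ν * exp (ν * x) /
        exp (∫ y in (2 : ℝ)..x, 2 * (1 + t y * exp (-ν * y))) :=
      div_nonneg (mul_nonneg (div_nonneg (by linarith) (by linarith)) (exp_pos _).le)
        (exp_pos _).le
    linarith [hode x hx, le_abs_self (g x), hgφ x hx]
  have hlow : ∀ x, r₀ ≤ x → (∀ y ∈ Icc r₀ x, -(10 * h y * expDivPow ν 1 y) ≤ t y) →
      -(2 * h x * expDivPow ν 1 x) - ν / 2 * t x ^ 2 * exp (-ν * x)
        - 2 * lamI * exp ((ν - 1) * x) ≤ t' x := fun x hx ht => by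
    have hI := le_integral_two_mul_one_add (hlarge x hx).2.2 htc ht₀
      (fun y hy => (hlarge y hy.1).1) ht
    linarith [hode x hx, neg_abs_le (g x), hgφ x hx, div_exp_le_of_le_integral hν hlam hI]
  intro r hr
  have hr₀5 := (hlarge r₀ le_rfl).2.2
  have ht₀r₀ := ht₀ r₀ (by linarith) le_rfl
  have hupper := upper_bound_of_deriv_le hν (by linarith) hpos hmono htd hup hr
  have hlower := lower_bound_of_deriv_ge hν hlam (by linarith) hpos hmono
    (fun x hx => (hlarge x hx).1) (fun x hx => (hlarge x hx).2.1) htd ht₀r₀ hlow hr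
  have hhφ := mul_pos (hpos r (by linarith)) (expDivPow_pos ν 1 (show -1 < r by linarith))
  rw [mul_assoc, show h r / (1 + r) * exp (ν * r) = h r * expDivPow ν 1 r by
    rw [expDivPow, pow_one]; ring, abs_le]
  constructor <;> linarith
end

section
/- The Bessel-series solution and its square-integrability near 0: Let ν > 1 and λ > 0. The series u(r) = √r · Σ_{m=0}^{∞} ((−1)^m / (Γ(m+1) Γ(ν+m+1))) (√λ · r / 2)^{2m+ν} converges for every r > 0, the resulting function u : (0,∞) → ℝ is twice differentiable and satisfies −u''(r) + ((ν² − 1/4)/r²) u(r) = λ u(r) for all r > 0, and u restricted to (0,1) is square-integrable, i.e. ∫₀¹ u(r)² dr < ∞. -/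
/-!
With `a m = (-1)^m / (m! Γ(ν+m+1))` and `g t = ∑ a m t^m`, the `m`-th term of the series is
`a m (√λ r/2)^(2m+ν)`, so `u r = √r (√λ r/2)^ν g(λr²/4) = r^(ν+1/2) G(λr²/4)` with
`G = (√λ/2)^ν g`. The ratio `|a (m+1)| / |a m| = 1/((m+1)(ν+m+1))` tends to `0`, so `g` is an
entire power series that can be differentiated term by term, and the recurrence
`(ν+m+1)(m+1) a (m+1) = -a m` says exactly that `t g'' + (ν+1) g' + g = 0`. For
`u r = r^(ν+1/2) G(λr²/4)` this equation becomes `-u'' + (ν²-1/4)/r² u = λ u`, because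
`(ν+1/2)(ν-1/2) = ν² - 1/4`. Finally `u` is continuous on `[0, 1]` since `ν + 1/2 > 0`, hence
square-integrable there.
-/

open Set MeasureTheory Filter Topology

noncomputable section

def powerSum (a : ℕ → ℝ) (t : ℝ) : ℝ := ∑' m, a m * t ^ m

def derivCoeff (a : ℕ → ℝ) (m : ℕ) : ℝ := (m + 1) * a (m + 1)

section PowerSum

variable {a : ℕ → ℝ}

theorem summable_mul_pow (ha : ∀ R, Summable fun m => |a m| * R ^ m) (t : ℝ) :
    Summable fun m => a m * t ^ m :=
  (ha |t|).of_norm_bounded fun m => by rw [Real.norm_eq_abs, abs_mul, abs_pow]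

theorem summable_abs_mul_pow_of_tendsto_ratio (ha : ∀ᶠ m in atTop, a m ≠ 0)
    (hratio : Tendsto (fun m => |a (m + 1)| / |a m|) atTop (𝓝 0)) (R : ℝ) :
    Summable fun m => |a m| * R ^ m := by
  have hrad := FormalMultilinearSeries.ofScalars_radius_eq_top_of_tendsto ℝ a ha hratio
  have hsum := (FormalMultilinearSeries.ofScalars ℝ a).summable_norm_mul_pow
    (r := ‖R‖₊) (by rw [hrad]; exact ENNReal.coe_lt_top)
  simp only [FormalMultilinearSeries.ofScalars_norm, coe_nnnorm, Real.norm_eq_abs] at hsum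
  exact hsum.of_norm_bounded fun m => by rw [Real.norm_eq_abs, abs_mul, abs_pow, abs_abs]

theorem summable_abs_derivCoeff_mul_pow (ha : ∀ R, Summable fun m => |a m| * R ^ m) (R : ℝ) :
    Summable fun m => |derivCoeff a m| * R ^ m := by
  set S := |R| + 1
  refine ((summable_nat_add_iff 1).mpr (ha (2 * S))).of_norm_bounded fun m => ?_
  have hm : ((m + 1 : ℕ) : ℝ) ≤ 2 ^ (m + 1) := by exact_mod_cast Nat.lt_two_pow_self.le
  have hR : |R| ^ m ≤ S ^ (m + 1) :=
    (pow_le_pow_left₀ (abs_nonneg R) (by linarith) m).trans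
      (pow_le_pow_right₀ (by linarith [abs_nonneg R]) m.le_succ)
  rw [Real.norm_eq_abs, abs_mul, abs_abs, abs_pow, derivCoeff, abs_mul, mul_pow]
  push_cast at hm ⊢
  rw [abs_of_nonneg (by positivity)]
  calc (m + 1 : ℝ) * |a (m + 1)| * |R| ^ m = |a (m + 1)| * ((m + 1) * |R| ^ m) := by ring
    _ ≤ |a (m + 1)| * (2 ^ (m + 1) * S ^ (m + 1)) := by gcongr

theorem hasDerivAt_powerSum (ha : ∀ R, Summable fun m => |a m| * R ^ m) (t : ℝ) :
    HasDerivAt (powerSum a) (powerSum (derivCoeff a) t) t := by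
  set S := |t| + 1
  have hbound : Summable fun m => |a m| * (m * S ^ (m - 1)) := by
    refine (summable_nat_add_iff 1).mp ((summable_abs_derivCoeff_mul_pow ha S).congr fun m => ?_)
    rw [derivCoeff, abs_mul, abs_of_nonneg (by positivity), Nat.add_sub_cancel]
    push_cast
    ring
  have hderiv := hasDerivAt_tsum_of_isPreconnected hbound Metric.isOpen_ball
    (convex_ball (0 : ℝ) S).isPreconnected (g := fun m z => a m * z ^ m)
    (fun m y _ => (hasDerivAt_pow m y).const_mul (a m))
    (fun m y hy => by
      have hy : |y| ≤ S := by simpa using (mem_ball_zero_iff.mp hy).le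
      rw [Real.norm_eq_abs, abs_mul, abs_mul, abs_pow, Nat.abs_cast]
      gcongr)
    (Metric.mem_ball_self (by positivity)) (summable_mul_pow ha 0)
    (by simp [S] : t ∈ Metric.ball 0 S)
  refine hderiv.congr_deriv (HasSum.tsum_eq ?_)
  refine (hasSum_nat_add_iff' 1).mp ?_
  simp only [Finset.range_one, Finset.sum_singleton, CharP.cast_eq_zero, zero_mul, mul_zero,
    sub_zero]
  refine (summable_mul_pow (summable_abs_derivCoeff_mul_pow ha) t).hasSum.congr_fun fun m => ?_
  simp only [derivCoeff, Nat.add_sub_cancel]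
  push_cast
  ring

theorem differentiable_powerSum (ha : ∀ R, Summable fun m => |a m| * R ^ m) :
    Differentiable ℝ (powerSum a) :=
  fun t => (hasDerivAt_powerSum ha t).differentiableAt

theorem hasSum_natCast_mul_mul_pow (ha : ∀ R, Summable fun m => |a m| * R ^ m) (t : ℝ) :
    HasSum (fun m => m * a m * t ^ m) (t * powerSum (derivCoeff a) t) := by
  refine (hasSum_nat_add_iff' 1).mp ?_
  simp only [Finset.range_one, Finset.sum_singleton, CharP.cast_eq_zero, zero_mul, sub_zero]
  refine ((summable_mul_pow (summable_abs_derivCoeff_mul_pow ha) t).hasSum.mul_left t).congr_fun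
    fun m => ?_
  simp only [derivCoeff]
  push_cast
  ring

end PowerSum

def besselCoeff (ν : ℝ) (m : ℕ) : ℝ :=
  (-1 : ℝ) ^ m / (Real.Gamma ((m : ℝ) + 1) * Real.Gamma (ν + (m : ℝ) + 1))

section BesselCoeff

variable {ν : ℝ}

theorem besselCoeff_ne_zero (hν : -1 < ν) (m : ℕ) : besselCoeff ν m ≠ 0 := by
  have h₁ := Real.Gamma_pos_of_pos (by positivity : (0 : ℝ) < m + 1)
  have h₂ := Real.Gamma_pos_of_pos (by linarith [m.cast_nonneg (α := ℝ)] : 0 < ν + m + 1)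
  simp only [besselCoeff]
  positivity

theorem add_mul_derivCoeff_besselCoeff (hν : -1 < ν) (m : ℕ) :
    (ν + m + 1) * derivCoeff (besselCoeff ν) m = -besselCoeff ν m := by
  have hm : (0 : ℝ) < m + 1 := by positivity
  have hνm : 0 < ν + m + 1 := by linarith [m.cast_nonneg (α := ℝ)]
  have h₁ := Real.Gamma_pos_of_pos hm
  have h₂ := Real.Gamma_pos_of_pos hνm
  simp only [derivCoeff, besselCoeff, Nat.cast_add, Nat.cast_one, pow_succ,
    ← add_assoc, Real.Gamma_add_one hm.ne', Real.Gamma_add_one hνm.ne']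
  field_simp

theorem tendsto_abs_besselCoeff_ratio (hν : -1 < ν) :
    Tendsto (fun m => |besselCoeff ν (m + 1)| / |besselCoeff ν m|) atTop (𝓝 0) := by
  have hden : Tendsto (fun m : ℕ => ((m : ℝ) + 1) * (ν + m + 1)) atTop atTop :=
    (tendsto_atTop_add_const_right _ 1 tendsto_natCast_atTop_atTop).atTop_mul_atTop₀
      (tendsto_atTop_add_const_right _ 1
        (tendsto_atTop_add_const_left _ ν tendsto_natCast_atTop_atTop))
  refine hden.inv_tendsto_atTop.congr fun m => ?_
  have hνm : 0 < ν + m + 1 := by linarith [m.cast_nonneg (α := ℝ)]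
  have hrec := add_mul_derivCoeff_besselCoeff hν m
  rw [derivCoeff] at hrec
  rw [eq_div_iff (abs_ne_zero.mpr (besselCoeff_ne_zero hν m)), ← abs_neg, ← hrec, abs_mul,
    abs_mul, abs_of_pos hνm, abs_of_pos (by positivity : (0 : ℝ) < m + 1), Pi.inv_apply]
  field_simp

theorem summable_abs_besselCoeff_mul_pow (hν : -1 < ν) (R : ℝ) :
    Summable fun m => |besselCoeff ν m| * R ^ m :=
  summable_abs_mul_pow_of_tendsto_ratio (Eventually.of_forall (besselCoeff_ne_zero hν))
    (tendsto_abs_besselCoeff_ratio hν) R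

theorem powerSum_besselCoeff_ode (hν : -1 < ν) (t : ℝ) :
    t * powerSum (derivCoeff (derivCoeff (besselCoeff ν))) t
      + (ν + 1) * powerSum (derivCoeff (besselCoeff ν)) t + powerSum (besselCoeff ν) t = 0 := by
  have ha := summable_abs_besselCoeff_mul_pow hν
  have hb := summable_abs_derivCoeff_mul_pow ha
  have hsum := ((hasSum_natCast_mul_mul_pow hb t).add
    ((summable_mul_pow hb t).hasSum.mul_left (ν + 1))).add (summable_mul_pow ha t).hasSum
  refine hsum.unique (hasSum_zero.congr_fun fun m => ?_)
  linear_combination t ^ m * add_mul_derivCoeff_besselCoeff hν m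

end BesselCoeff

theorem hasSum_besselCoeff_mul_rpow {ν x : ℝ} (hν : -1 < ν) (hx : 0 < x) :
    HasSum (fun m : ℕ => besselCoeff ν m * x ^ (2 * (m : ℝ) + ν))
      (x ^ ν * powerSum (besselCoeff ν) (x ^ 2)) := by
  refine ((summable_mul_pow (summable_abs_besselCoeff_mul_pow hν) (x ^ 2)).hasSum.mul_left
    (x ^ ν)).congr_fun fun m => ?_
  rw [Real.rpow_add hx, Real.rpow_mul hx.le, Real.rpow_two, Real.rpow_natCast]
  ring

theorem sqrt_mul_rpow_mul_comp_sq {ν lam r : ℝ} (hlam : 0 ≤ lam) (hr : 0 < r) (f : ℝ → ℝ) :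
    √r * ((√lam * r / 2) ^ ν * f ((√lam * r / 2) ^ 2))
      = r ^ (ν + 1 / 2) * ((√lam / 2) ^ ν * f (lam / 4 * r ^ 2)) := by
  have hsq : (√lam * r / 2) ^ 2 = lam / 4 * r ^ 2 := by
    rw [div_pow, mul_pow, Real.sq_sqrt hlam]
    ring
  rw [hsq, mul_div_right_comm, Real.mul_rpow (by positivity) hr.le, Real.rpow_add hr,
    Real.sqrt_eq_rpow]
  ring

section RadialSubstitution

variable {G G' G'' : ℝ → ℝ} {α c r : ℝ}

theorem hasDerivAt_rpow_mul_comp_sq {g : ℝ} (hr : 0 < r) (hG : HasDerivAt G g (c * r ^ 2)) :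
    HasDerivAt (fun x => x ^ α * G (c * x ^ 2))
      (α * r ^ (α - 1) * G (c * r ^ 2) + 2 * c * r ^ (α + 1) * g) r := by
  have hsq : HasDerivAt (fun x => c * x ^ 2) (c * (2 * r)) r := by
    simpa using (hasDerivAt_pow 2 r).const_mul c
  refine ((Real.hasDerivAt_rpow_const (Or.inl hr.ne')).mul (hG.comp r hsq)).congr_deriv ?_
  rw [Function.comp_apply, Real.rpow_add_one hr.ne']
  ring

theorem hasDerivAt_deriv_rpow_mul_comp_sq (hG : ∀ t, HasDerivAt G (G' t) t)
    (hG' : ∀ t, HasDerivAt G' (G'' t) t) (hr : 0 < r) :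
    HasDerivAt (deriv fun x => x ^ α * G (c * x ^ 2))
      (α * (α - 1) * r ^ (α - 2) * G (c * r ^ 2) + 2 * c * (2 * α + 1) * r ^ α * G' (c * r ^ 2)
        + 4 * c ^ 2 * r ^ (α + 2) * G'' (c * r ^ 2)) r := by
  have hderiv : (deriv fun x => x ^ α * G (c * x ^ 2)) =ᶠ[𝓝 r]
      fun x => α * (x ^ (α - 1) * G (c * x ^ 2)) + 2 * c * (x ^ (α + 1) * G' (c * x ^ 2)) := by
    filter_upwards [Ioi_mem_nhds hr] with x hx
    rw [(hasDerivAt_rpow_mul_comp_sq hx (hG _)).deriv]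
    ring
  refine HasDerivAt.congr_of_eventuallyEq ?_ hderiv
  have h₁ := (hasDerivAt_rpow_mul_comp_sq (α := α - 1) (c := c) hr (hG _)).const_mul α
  have h₂ := (hasDerivAt_rpow_mul_comp_sq (α := α + 1) (c := c) hr (hG' _)).const_mul (2 * c)
  refine (h₁.add h₂).congr_deriv ?_
  rw [sub_add_cancel, add_sub_cancel_right, show α - 1 - 1 = α - 2 by ring,
    show α + 1 + 1 = α + 2 by ring]
  ring

theorem rpow_mul_comp_sq_ode {ν lam : ℝ} (hG : ∀ t, HasDerivAt G (G' t) t)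
    (hG' : ∀ t, HasDerivAt G' (G'' t) t) (hode : ∀ t, t * G'' t + (ν + 1) * G' t + G t = 0)
    (hr : 0 < r) :
    -deriv (deriv fun x => x ^ (ν + 1 / 2) * G (lam / 4 * x ^ 2)) r
      + (ν ^ 2 - 1 / 4) / r ^ 2 * (r ^ (ν + 1 / 2) * G (lam / 4 * r ^ 2))
      = lam * (r ^ (ν + 1 / 2) * G (lam / 4 * r ^ 2)) := by
  have hsub : r ^ (ν + 1 / 2 - 2) = r ^ (ν + 1 / 2) / r ^ 2 := by
    rw [Real.rpow_sub hr, Real.rpow_two]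
  have hadd : r ^ (ν + 1 / 2 + 2) = r ^ (ν + 1 / 2) * r ^ 2 := by
    rw [Real.rpow_add hr, Real.rpow_two]
  have h := hode (lam / 4 * r ^ 2)
  rw [(hasDerivAt_deriv_rpow_mul_comp_sq hG hG' hr).deriv, hsub, hadd]
  generalize r ^ (ν + 1 / 2) = P
  generalize G (lam / 4 * r ^ 2) = g₀ at h ⊢
  generalize G' (lam / 4 * r ^ 2) = g₁ at h ⊢
  generalize G'' (lam / 4 * r ^ 2) = g₂ at h ⊢
  field_simp
  linear_combination (-16 * lam * P * r ^ 2) * h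

end RadialSubstitution

end

/-- The Bessel-series solution of the Bessel-type Schrödinger equation and its
square-integrability near `0`. -/
theorem stmt8 (ν lam : ℝ) (hν : 1 < ν) (hlam : 0 < lam) :
    (∀ r : ℝ, 0 < r → Summable (fun m : ℕ =>
      (-1 : ℝ) ^ m / (Real.Gamma ((m : ℝ) + 1) * Real.Gamma (ν + (m : ℝ) + 1)) *
        (Real.sqrt lam * r / 2) ^ (2 * (m : ℝ) + ν))) ∧
    ∃ u : ℝ → ℝ,
      (∀ r : ℝ, 0 < r → u r = Real.sqrt r * ∑' m : ℕ,
        (-1 : ℝ) ^ m / (Real.Gamma ((m : ℝ) + 1) * Real.Gamma (ν + (m : ℝ) + 1)) *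
          (Real.sqrt lam * r / 2) ^ (2 * (m : ℝ) + ν)) ∧
      (∀ r : ℝ, 0 < r → DifferentiableAt ℝ u r ∧ DifferentiableAt ℝ (deriv u) r) ∧
      (∀ r : ℝ, 0 < r →
        -(deriv (deriv u) r) + (ν ^ 2 - 1 / 4) / r ^ 2 * u r = lam * u r) ∧
      IntegrableOn (fun r => (u r) ^ 2) (Ioo 0 1) := by
  have hν' : -1 < ν := by linarith
  have ha := summable_abs_besselCoeff_mul_pow hν'
  have hb := summable_abs_derivCoeff_mul_pow ha
  have hseries (r : ℝ) (hr : 0 < r) := hasSum_besselCoeff_mul_rpow hν' (x := √lam * r / 2)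
    (by positivity)
  simp only [besselCoeff] at hseries
  set C := (√lam / 2) ^ ν
  set G := fun t => C * powerSum (besselCoeff ν) t
  have hG (t : ℝ) : HasDerivAt G (C * powerSum (derivCoeff (besselCoeff ν)) t) t :=
    (hasDerivAt_powerSum ha t).const_mul C
  have hG' (t : ℝ) : HasDerivAt (fun t => C * powerSum (derivCoeff (besselCoeff ν)) t)
      (C * powerSum (derivCoeff (derivCoeff (besselCoeff ν))) t) t :=
    (hasDerivAt_powerSum hb t).const_mul C
  refine ⟨fun r hr => (hseries r hr).summable, fun r => r ^ (ν + 1 / 2) * G (lam / 4 * r ^ 2),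
    fun r hr => ?_, fun r hr => ⟨(hasDerivAt_rpow_mul_comp_sq hr (hG _)).differentiableAt,
      (hasDerivAt_deriv_rpow_mul_comp_sq hG hG' hr).differentiableAt⟩,
    fun r hr => rpow_mul_comp_sq_ode hG hG'
      (fun t => by linear_combination C * powerSum_besselCoeff_ode hν' t) hr, ?_⟩
  · rw [(hseries r hr).tsum_eq, sqrt_mul_rpow_mul_comp_sq hlam.le hr]
  · have hcont : Continuous fun r => r ^ (ν + 1 / 2) * G (lam / 4 * r ^ 2) :=
      (Real.continuous_rpow_const (by linarith)).mul (continuous_const.mul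
        ((differentiable_powerSum ha).continuous.comp (by fun_prop)))
    exact (hcont.pow 2).integrableOn_Icc.mono_set Ioo_subset_Icc_self
end

section
/- Uniqueness up to scalar multiple of square-integrable solutions near the singular endpoint 0: Let ν > 1 and λ ∈ ℝ. If u₁, u₂ : (0,1) → ℝ are twice differentiable, each satisfies −u''(r) + ((ν² − 1/4)/r²) u(r) = λ u(r) for all r ∈ (0,1), and each is square-integrable on (0,1), then u₁ and u₂ are linearly dependent, i.e. there exist real constants c₁, c₂, not both zero, with c₁ u₁(r) + c₂ u₂(r) = 0 for all r ∈ (0,1). -/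
/-!
Write the equation as `u'' = q u` with `q r = (ν² - 1/4) / r² - λ`; since `ν > 1`,
`q r ≥ 3 / (4 r²)` on some `(0, a)`. The function `φ r = r ^ (-1/2) - r ^ (3/2) / a²` solves
`φ'' = 3 φ / (4 r²)` and vanishes at `a`, so by a Sturm comparison argument a solution `v` with
`v a = 0` and `v' a < 0` stays above `ε φ`; hence `v² ≥ c / r` near `0` and `v` is not
square-integrable. Consequently a square-integrable solution vanishing at `a` has `v' a = 0` and
is identically zero by uniqueness for the ODE. Applied to `u₂ a • u₁ - u₁ a • u₂` this gives the
linear dependence.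
-/

open Set MeasureTheory Filter Topology

theorem pos_of_deriv_neg_of_convex_where_pos {g g' g'' : ℝ → ℝ} {c a : ℝ}
    (hg : ∀ x ∈ Ioc c a, HasDerivAt g (g' x) x) (hg' : ∀ x ∈ Ioc c a, HasDerivAt g' (g'' x) x)
    (hconv : ∀ x ∈ Ioo c a, 0 < g x → 0 ≤ g'' x) (ha : g a = 0) (ha' : g' a < 0) :
    ∀ x ∈ Ioo c a, 0 < g x := by
  intro r hr
  by_contra! hr₀
  obtain ⟨l, hla, hl⟩ : ∃ l < a, ∀ x ∈ Ioo l a, 0 < g x := by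
    have hslope := ((hg a (right_mem_Ioc.2 (hr.1.trans hr.2))).hasDerivWithinAt
      (s := Iio a)).limsup_slope_le' (lt_irrefl a) ha'
    obtain ⟨l, hl, hsub⟩ := mem_nhdsLT_iff_exists_Ioo_subset.1 hslope
    refine ⟨l, hl, fun x hx => ?_⟩
    have hx' : slope g a x < 0 := hsub hx
    rw [slope_def_field, ha, sub_zero] at hx'
    exact ((div_neg_iff.1 hx').resolve_right fun h => (sub_neg.2 hx.2).not_gt h.2).1
  -- `t` is the last point of `[r, max l r]` where `g ≤ 0`
  set l' := max l r
  have hsub : Icc r a ⊆ Ioc c a := Icc_subset_Ioc_iff hr.2.le |>.2 ⟨hr.1, le_rfl⟩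
  have hclosed : IsClosed (Icc r l' ∩ g ⁻¹' Iic 0) :=
    ((HasDerivAt.continuousOn hg).mono ((Icc_subset_Icc_right (max_le hla.le hr.2.le)).trans
      hsub)).preimage_isClosed_of_isClosed isClosed_Icc isClosed_Iic
  obtain ⟨t, ⟨⟨hrt, htl⟩, hgt⟩, htmax⟩ :=
    (isCompact_Icc.of_isClosed_subset hclosed inter_subset_left).exists_isGreatest
      ⟨r, ⟨le_rfl, le_max_right l r⟩, hr₀⟩
  have hta : t < a := htl.trans_lt (max_lt hla hr.2)
  have hsub' : Icc t a ⊆ Ioc c a := (Icc_subset_Icc_left hrt).trans hsub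
  have hpos : ∀ x ∈ Ioo t a, 0 < g x := by
    intro x hx
    by_cases hxl : x ≤ l'
    · by_contra! hgx
      exact (htmax ⟨⟨hrt.trans hx.1.le, hxl⟩, hgx⟩).not_gt hx.1
    · exact hl x ⟨(le_max_left l r).trans_lt (not_le.1 hxl), hx.2⟩
  -- `g` is convex on `[t, a]`, so `g' ≤ g' a < 0` there and `g t > g a = 0`
  have hg'mono : MonotoneOn g' (Icc t a) := by
    refine monotoneOn_of_hasDerivWithinAt_nonneg (f' := g'') (convex_Icc t a)
      (HasDerivAt.continuousOn fun x hx => hg' x (hsub' hx)) (fun x hx => ?_) (fun x hx => ?_) <;>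
      rw [interior_Icc] at hx
    · exact (hg' x (hsub' (Ioo_subset_Icc_self hx))).hasDerivWithinAt
    · exact hconv x ⟨(hsub' (Ioo_subset_Icc_self hx)).1, hx.2⟩ (hpos x hx)
  have hganti : StrictAntiOn g (Icc t a) := by
    refine strictAntiOn_of_hasDerivWithinAt_neg (f' := g') (convex_Icc t a)
      (HasDerivAt.continuousOn fun x hx => hg x (hsub' hx)) (fun x hx => ?_) (fun x hx => ?_) <;>
      rw [interior_Icc] at hx
    · exact (hg x (hsub' (Ioo_subset_Icc_self hx))).hasDerivWithinAt
    · exact (hg'mono (Ioo_subset_Icc_self hx) (right_mem_Icc.2 hta.le) hx.2.le).trans_lt ha'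
  have hgat : g a < g t := hganti (left_mem_Icc.2 hta.le) (right_mem_Icc.2 hta.le) hta
  exact (ha ▸ hgat).not_ge hgt

def IsSolutionOn (q : ℝ → ℝ) (s : Set ℝ) (v : ℝ → ℝ) : Prop :=
  ∀ x ∈ s, DifferentiableAt ℝ v x ∧ HasDerivAt (deriv v) (q x * v x) x

namespace IsSolutionOn

variable {q p u v : ℝ → ℝ} {s t : Set ℝ}

theorem mono (hv : IsSolutionOn q s v) (hts : t ⊆ s) : IsSolutionOn q t v :=
  fun x hx => hv x (hts hx)

theorem continuousOn (hv : IsSolutionOn q s v) : ContinuousOn v s :=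
  fun x hx => (hv x hx).1.continuousAt.continuousWithinAt

theorem const_smul (hv : IsSolutionOn q s v) (c : ℝ) : IsSolutionOn q s (c • v) := by
  intro x hx
  refine ⟨(hv x hx).1.const_smul c, ?_⟩
  have hderiv : deriv (c • v) = c • deriv v := funext fun _ => deriv_const_smul_field c v
  rw [hderiv]
  simpa [mul_left_comm] using (hv x hx).2.const_smul c

theorem sub (hs : IsOpen s) (hu : IsSolutionOn q s u) (hv : IsSolutionOn q s v) :
    IsSolutionOn q s (u - v) := by
  intro x hx
  refine ⟨(hu x hx).1.sub (hv x hx).1, ?_⟩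
  have hderiv : deriv (u - v) =ᶠ[𝓝 x] deriv u - deriv v := by
    filter_upwards [hs.mem_nhds hx] with y hy using deriv_sub (hu y hy).1 (hv y hy).1
  simpa [mul_sub] using ((hu x hx).2.sub (hv x hx).2).congr_of_eventuallyEq hderiv

theorem eqOn_zero {α β r₀ : ℝ} (hq : ContinuousOn q (Ioo α β)) (hv : IsSolutionOn q (Ioo α β) v)
    (hr₀ : r₀ ∈ Ioo α β) (h0 : v r₀ = 0) (h0' : deriv v r₀ = 0) : EqOn v 0 (Ioo α β) := by
  intro r hr
  obtain ⟨α', β', hsub, hr', hr₀'⟩ :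
      ∃ α' β', Icc α' β' ⊆ Ioo α β ∧ r ∈ Ioo α' β' ∧ r₀ ∈ Ioo α' β' := by
    have hmin : α < min r r₀ := lt_min hr.1 hr₀.1
    have hmax : max r r₀ < β := max_lt hr.2 hr₀.2
    refine ⟨(α + min r r₀) / 2, (max r r₀ + β) / 2, fun x ⟨hx₁, hx₂⟩ => ⟨by linarith, by linarith⟩,
      ⟨?_, ?_⟩, ⟨?_, ?_⟩⟩ <;>
      linarith [min_le_left r r₀, min_le_right r r₀, le_max_left r r₀, le_max_right r r₀]
  obtain ⟨C, hC⟩ := isCompact_Icc.exists_bound_of_continuousOn (hq.mono hsub)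
  have hLip : ∀ t ∈ Ioo α' β', LipschitzOnWith (max 1 C.toNNReal)
      (fun y : ℝ × ℝ => (y.2, q t * y.1)) univ := by
    intro t ht
    refine (LipschitzWith.prod_snd.prodMk ((lipschitzWith_smul (q t)).comp LipschitzWith.prod_fst)
      |>.weaken ?_).lipschitzOnWith
    refine max_le_max le_rfl ?_
    rw [mul_one, ← NNReal.coe_le_coe, coe_nnnorm, Real.coe_toNNReal']
    exact le_max_of_le_left (hC t (Ioo_subset_Icc_self ht))
  have hmem : ∀ {x}, x ∈ Ioo α' β' → x ∈ Ioo α β := fun hx => hsub (Ioo_subset_Icc_self hx)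
  have hsol := ODE_solution_unique_of_mem_Ioo hLip hr₀' (f := fun x => (v x, deriv v x))
    (g := fun _ => 0)
    (fun x hx => ⟨(hv x (hmem hx)).1.hasDerivAt.prodMk (hv x (hmem hx)).2, mem_univ _⟩)
    (fun x _ => ⟨by simpa [Prod.mk_zero_zero] using hasDerivAt_const x (0 : ℝ × ℝ), mem_univ _⟩)
    (by simp [h0, h0']) hr'
  simpa using congrArg Prod.fst hsol

theorem lt_of_deriv_lt {c a : ℝ} (hu : IsSolutionOn p (Ioc c a) u)
    (hv : IsSolutionOn q (Ioc c a) v)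
    (hpq : ∀ x ∈ Ioo c a, 0 ≤ p x ∧ p x ≤ q x) (hu_pos : ∀ x ∈ Ioo c a, 0 < u x)
    (ha : v a = u a) (ha' : deriv v a < deriv u a) : ∀ x ∈ Ioo c a, u x < v x := by
  have hdiff_pos := pos_of_deriv_neg_of_convex_where_pos (g := v - u) (g' := deriv v - deriv u)
    (g'' := fun x => q x * v x - p x * u x)
    (fun x hx => (hv x hx).1.hasDerivAt.sub (hu x hx).1.hasDerivAt)
    (fun x hx => (hv x hx).2.sub (hu x hx).2) ?_ (by simp [ha]) (by simpa using ha')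
  · exact fun x hx => sub_pos.1 (hdiff_pos x hx)
  intro x hx hvu
  have hvu : u x < v x := by simpa using hvu
  obtain ⟨hp, hpq⟩ := hpq x hx
  calc 0 ≤ p x * (v x - u x) := mul_nonneg hp (sub_nonneg.2 hvu.le)
    _ ≤ q x * v x - p x * u x := by nlinarith [mul_le_mul_of_nonneg_right hpq (hu_pos x hx).le]

end IsSolutionOn

theorem isSolutionOn_rpow {s c : ℝ} (hc : s * (s - 1) = c) :
    IsSolutionOn (fun x => c / x ^ 2) (Ioi 0) (fun x => x ^ s) := by
  intro x hx
  have hderiv : deriv (fun x => x ^ s) =ᶠ[𝓝 x] fun x => s * x ^ (s - 1) := by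
    filter_upwards [isOpen_Ioi.mem_nhds hx] with y hy
    exact (Real.hasDerivAt_rpow_const (Or.inl (ne_of_gt hy))).deriv
  refine ⟨(Real.hasDerivAt_rpow_const (Or.inl hx.ne')).differentiableAt, ?_⟩
  refine (((Real.hasDerivAt_rpow_const (p := s - 1) (Or.inl hx.ne')).const_mul s)
    |>.congr_of_eventuallyEq hderiv).congr_deriv ?_
  rw [← hc, show s - 1 - 1 = s - 2 by ring, Real.rpow_sub hx, Real.rpow_two]
  field_simp

theorem not_integrableOn_sq_of_mul_rpow_le {v : ℝ → ℝ} {a c : ℝ} (ha : 0 < a) (hc : 0 < c)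
    (hv : ∀ x ∈ Ioo 0 a, c * x ^ (-1 / 2 : ℝ) ≤ v x) :
    ¬IntegrableOn (fun x => v x ^ 2) (Ioo 0 a) := by
  intro hint
  have hinv : IntegrableOn (fun x : ℝ => x ^ (-1 : ℝ)) (Ioo 0 a) := by
    refine Integrable.mono' (hint.const_mul (c ^ 2)⁻¹)
      (measurable_id.pow_const _).aestronglyMeasurable ?_
    rw [ae_restrict_iff' measurableSet_Ioo]
    refine Eventually.of_forall fun x hx => ?_
    have hsq : (x ^ (-1 / 2 : ℝ)) ^ 2 = x ^ (-1 : ℝ) := by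
      rw [← Real.rpow_natCast, ← Real.rpow_mul hx.1.le]; norm_num
    rw [Real.norm_of_nonneg (Real.rpow_pos_of_pos hx.1 _).le, le_inv_mul_iff₀ (by positivity),
      ← hsq, ← mul_pow]
    exact pow_le_pow_left₀ (mul_pos hc (Real.rpow_pos_of_pos hx.1 _)).le (hv x hx) 2
  have := (intervalIntegral.integrableOn_Ioo_rpow_iff ha).1 hinv
  norm_num at this

namespace IsSolutionOn

variable {q v : ℝ → ℝ} {a b : ℝ}

theorem not_integrableOn_sq (hv : IsSolutionOn q (Ioc 0 a) v) (ha : 0 < a)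
    (hq : ∀ x ∈ Ioo 0 a, 3 / 4 / x ^ 2 ≤ q x) (hva : v a = 0) (hv'a : deriv v a < 0) :
    ¬IntegrableOn (fun x => v x ^ 2) (Ioo 0 a) := by
  set φ : ℝ → ℝ := (fun x => x ^ (-1 / 2 : ℝ)) - (a ^ 2)⁻¹ • fun x => x ^ (3 / 2 : ℝ)
  have hφ : IsSolutionOn (fun x => 3 / 4 / x ^ 2) (Ioi 0) φ :=
    (isSolutionOn_rpow (by norm_num)).sub isOpen_Ioi
      ((isSolutionOn_rpow (by norm_num)).const_smul _)
  have hφ_eq : ∀ x > 0, φ x = x ^ (-1 / 2 : ℝ) * (1 - (x / a) ^ 2) := by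
    intro x hx
    simp only [φ, Pi.sub_apply, Pi.smul_apply, smul_eq_mul]
    rw [show (3 / 2 : ℝ) = -1 / 2 + 2 by norm_num, Real.rpow_add hx, Real.rpow_two]
    field_simp
  -- small enough that `ε * φ' a > v' a`, whatever the value of `φ' a`
  set ε := -deriv v a / (|deriv φ a| + 1)
  have hε : 0 < ε := div_pos (neg_pos.2 hv'a) (by positivity)
  have hεφ' : deriv v a < deriv (ε • φ) a := by
    have hεd : ε * (|deriv φ a| + 1) = -deriv v a := div_mul_cancel₀ _ (by positivity)
    have := mul_le_mul_of_nonneg_left (neg_abs_le (deriv φ a)) hε.le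
    rw [deriv_const_smul_field, smul_eq_mul]
    linarith
  have hlower : ∀ x ∈ Ioo 0 a, ε * φ x < v x :=
    ((hφ.const_smul ε).mono Ioc_subset_Ioi_self).lt_of_deriv_lt hv
      (fun x hx => ⟨by positivity, hq x hx⟩)
      (fun x hx => mul_pos hε (by
        rw [hφ_eq x hx.1]
        have : x / a < 1 := (div_lt_one ha).2 hx.2
        have : 0 < x / a := div_pos hx.1 ha
        exact mul_pos (Real.rpow_pos_of_pos hx.1 _) (by nlinarith)))
      (by simp [hva, hφ_eq a ha, ha.ne']) hεφ'
  intro hint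
  refine not_integrableOn_sq_of_mul_rpow_le (by linarith : 0 < a / 2) (c := 3 * ε / 4)
    (by positivity) (fun x hx => ?_) (hint.mono_set (Ioo_subset_Ioo_right (by linarith)))
  have hxa : x / a < 1 / 2 := by rw [div_lt_iff₀ ha]; linarith [hx.2]
  have hx_pos : 0 < x ^ (-1 / 2 : ℝ) := Real.rpow_pos_of_pos hx.1 _
  have hφx : 3 / 4 * x ^ (-1 / 2 : ℝ) ≤ φ x := by
    rw [hφ_eq x hx.1]
    have : 0 < x / a := div_pos hx.1 ha
    have hxa2 : (x / a) ^ 2 ≤ 1 / 4 := by nlinarith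
    nlinarith [mul_le_mul_of_nonneg_left hxa2 hx_pos.le]
  nlinarith [hlower x ⟨hx.1, by linarith [hx.2]⟩]

theorem eqOn_zero_of_memLp (hq : ContinuousOn q (Ioo 0 b)) (hv : IsSolutionOn q (Ioo 0 b) v)
    (ha : a ∈ Ioo 0 b) (hqa : ∀ x ∈ Ioo 0 a, 3 / 4 / x ^ 2 ≤ q x)
    (hL2 : MemLp v 2 (volume.restrict (Ioo 0 a))) (hva : v a = 0) : EqOn v 0 (Ioo 0 b) := by
  refine hv.eqOn_zero hq ha hva ?_
  have hv' : IsSolutionOn q (Ioc 0 a) v := hv.mono (Ioc_subset_Ioo_right ha.2)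
  rcases lt_trichotomy (deriv v a) 0 with hneg | hzero | hpos
  · exact absurd hL2.integrable_sq (hv'.not_integrableOn_sq ha.1 hqa hva hneg)
  · exact hzero
  · refine absurd (hL2.const_smul (-1)).integrable_sq
      ((hv'.const_smul (-1)).not_integrableOn_sq ha.1 hqa (by simp [hva]) ?_)
    simpa [deriv_const_smul_field] using hpos

end IsSolutionOn

theorem memLp_two_of_integrableOn_sq {u : ℝ → ℝ} {s t : Set ℝ} (ht : MeasurableSet t) (hts : t ⊆ s)
    (hu : ContinuousOn u t) (hint : IntegrableOn (fun x => u x ^ 2) s) :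
    MemLp u 2 (volume.restrict t) :=
  (memLp_two_iff_integrable_sq (hu.aestronglyMeasurable ht)).2 (hint.mono_set hts)

theorem exists_forall_le_bessel_potential {ν lam : ℝ} (hν : 1 < ν) :
    ∃ a ∈ Ioo (0 : ℝ) 1, ∀ x ∈ Ioo 0 a, 3 / 4 / x ^ 2 ≤ (ν ^ 2 - 1 / 4) / x ^ 2 - lam := by
  set δ := ν ^ 2 - 1
  have hδ : 0 < δ := by nlinarith
  set a := δ / (|lam| + δ + 1)
  have ha : a < 1 := (div_lt_one (by positivity)).2 (by linarith [abs_nonneg lam])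
  have hlam_a : |lam| * a ≤ δ := by
    rw [mul_div_assoc', div_le_iff₀ (by positivity)]
    nlinarith [abs_nonneg lam]
  refine ⟨a, ⟨by positivity, ha⟩, fun x hx => ?_⟩
  have hlam : lam * x ^ 2 ≤ δ :=
    calc lam * x ^ 2 ≤ |lam| * x ^ 2 := mul_le_mul_of_nonneg_right (le_abs_self lam) (sq_nonneg x)
      _ ≤ |lam| * a := mul_le_mul_of_nonneg_left (by nlinarith [hx.1, hx.2]) (abs_nonneg lam)
      _ ≤ δ := hlam_a
  have hx0 : x ≠ 0 := hx.1.ne'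
  rw [← sub_nonneg,
    show (ν ^ 2 - 1 / 4) / x ^ 2 - lam - 3 / 4 / x ^ 2 = (δ - lam * x ^ 2) / x ^ 2 by
      field_simp; ring]
  exact div_nonneg (by linarith) (sq_nonneg x)

/-- Uniqueness, up to scalar multiples, of square-integrable solutions of the
Bessel-type equation near the singular endpoint `0` (limit point case at `0`). -/
theorem stmt9 (ν lam : ℝ) (hν : 1 < ν) (u₁ u₂ : ℝ → ℝ)
    (hd₁ : ∀ r ∈ Ioo (0 : ℝ) 1, DifferentiableAt ℝ u₁ r ∧ DifferentiableAt ℝ (deriv u₁) r)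
    (hd₂ : ∀ r ∈ Ioo (0 : ℝ) 1, DifferentiableAt ℝ u₂ r ∧ DifferentiableAt ℝ (deriv u₂) r)
    (heq₁ : ∀ r ∈ Ioo (0 : ℝ) 1,
      -(deriv (deriv u₁) r) + (ν ^ 2 - 1 / 4) / r ^ 2 * u₁ r = lam * u₁ r)
    (heq₂ : ∀ r ∈ Ioo (0 : ℝ) 1,
      -(deriv (deriv u₂) r) + (ν ^ 2 - 1 / 4) / r ^ 2 * u₂ r = lam * u₂ r)
    (hint₁ : IntegrableOn (fun r => (u₁ r) ^ 2) (Ioo 0 1))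
    (hint₂ : IntegrableOn (fun r => (u₂ r) ^ 2) (Ioo 0 1)) :
    ∃ c₁ c₂ : ℝ, ¬(c₁ = 0 ∧ c₂ = 0) ∧ ∀ r ∈ Ioo (0 : ℝ) 1, c₁ * u₁ r + c₂ * u₂ r = 0 := by
  set q : ℝ → ℝ := fun r => (ν ^ 2 - 1 / 4) / r ^ 2 - lam
  have hq : ContinuousOn q (Ioo 0 1) :=
    (continuousOn_const.div (continuousOn_pow 2) fun r hr => pow_ne_zero 2 hr.1.ne').sub
      continuousOn_const
  have hsol₁ : IsSolutionOn q (Ioo 0 1) u₁ := fun r hr => ⟨(hd₁ r hr).1,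
    (hd₁ r hr).2.hasDerivAt.congr_deriv (by linear_combination -heq₁ r hr)⟩
  have hsol₂ : IsSolutionOn q (Ioo 0 1) u₂ := fun r hr => ⟨(hd₂ r hr).1,
    (hd₂ r hr).2.hasDerivAt.congr_deriv (by linear_combination -heq₂ r hr)⟩
  obtain ⟨a, ha, hqa⟩ := exists_forall_le_bessel_potential (lam := lam) hν
  have hsub : Ioo 0 a ⊆ Ioo 0 1 := Ioo_subset_Ioo_right ha.2.le
  have hL2₁ := memLp_two_of_integrableOn_sq measurableSet_Ioo hsub
    (hsol₁.continuousOn.mono hsub) hint₁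
  have hL2₂ := memLp_two_of_integrableOn_sq measurableSet_Ioo hsub
    (hsol₂.continuousOn.mono hsub) hint₂
  by_cases h₁ : u₁ a = 0
  · refine ⟨1, 0, by simp, fun r hr => ?_⟩
    simpa using hsol₁.eqOn_zero_of_memLp hq ha hqa hL2₁ h₁ hr
  · refine ⟨u₂ a, -u₁ a, fun h => h₁ (neg_eq_zero.1 h.2), fun r hr => ?_⟩
    have := ((hsol₁.const_smul (u₂ a)).sub isOpen_Ioo (hsol₂.const_smul (u₁ a))).eqOn_zero_of_memLp
      hq ha hqa ((hL2₁.const_smul _).sub (hL2₂.const_smul _)) (by simp [mul_comm]) hr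
    simpa [sub_eq_add_neg] using this
end

section
/- Local well-posedness with quantitative bounds at the matching point: Let n ≥ 2 be an integer, τ ≥ 0, λᵢ > 0, b ≥ 10, M > 0, and let V : (0,∞) → ℝ be continuous with |V(r)| ≤ M for r ∈ [b−1, b+1]. There exists δ₀ ∈ (0, 1/2) (depending only on n, τ, λᵢ, b, M) such that for every 0 < δ ≤ δ₀ the following holds: given f(r) = 1 for 2 ≤ r ≤ b − δ, there is a unique continuously differentiable function f on [b−δ, b+δ] with f(b−δ) = 1 satisfying, for every r ∈ [b−δ, b+δ], τ² + ((n−1)²/2) f(r) + ((n−1)²/4) f(r)² + ((n−1)/2) f'(r) + λᵢ / exp(∫₂^r 2(1 + f(x)) dx) = V(r) (where f(x) = 1 for 2 ≤ x ≤ b−δ in the integral), and this solution satisfies 1/2 < f(r) < 2 for all r ∈ [b−δ, b+δ]. -/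
/-!
With `w(r) = ∫₂^r 2(1 + f)`, the equation becomes a first-order system for `(f, w)` whose
right-hand side is smooth in `(f, w)` and continuous in `r`, with initial value `(1, 4(b - δ - 2))`
at `r = b - δ`. On the ball of radius `1/4` around that point we have `3/4 ≤ f ≤ 5/4` and
`e^{-w} ≤ 1`, so the field is bounded there by a constant `C` that does not depend on `δ`.
Once `2δC ≤ 1/4`, Picard–Lindelöf gives a solution on `[b - δ, b + δ]` that stays in the
ball, hence `1/2 < f < 2`. Any solution `f` of the original equation yields a solution `(f, w)`
of the system, so uniqueness for the locally Lipschitz system gives uniqueness of `f`.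
-/

open Set Metric
open scoped NNReal

namespace IsPicardLindelof

variable {E : Type*} [NormedAddCommGroup E] [NormedSpace ℝ E] [CompleteSpace E]
  {f : ℝ → E → E} {tmin tmax : ℝ} {t₀ : Icc tmin tmax} {x₀ : E} {a L K : ℝ≥0}

theorem exists_eq_forall_mem_Icc_hasDerivWithinAt_mem_closedBall
    (hf : IsPicardLindelof f t₀ x₀ a 0 L K) :
    ∃ α : ℝ → E, α t₀ = x₀ ∧ ∀ t ∈ Icc tmin tmax,
      HasDerivWithinAt α (f t (α t)) (Icc tmin tmax) t ∧ α t ∈ closedBall x₀ a := by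
  classical
  -- Freezing the field outside the ball makes it bounded by `L` everywhere, and the mean value
  -- inequality then keeps the solution inside the ball, where the two fields agree.
  set π : E → E := fun x => if x ∈ closedBall x₀ a then x else x₀
  have hπ : ∀ x, π x ∈ closedBall x₀ a := fun x => by
    unfold π; split_ifs with hx
    exacts [hx, mem_closedBall_self a.2]
  have hπ_eq : ∀ x ∈ closedBall x₀ a, π x = x := fun x hx => if_pos hx
  have hg : IsPicardLindelof (fun t x => f t (π x)) t₀ x₀ a 0 L K :=
    { lipschitzOnWith := fun t ht x hx y hy => by
        simpa only [hπ_eq x hx, hπ_eq y hy] using hf.lipschitzOnWith t ht hx hy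
      continuousOn := fun x hx => by simpa only [hπ_eq x hx] using hf.continuousOn x hx
      norm_le := fun t ht x _ => hf.norm_le t ht _ (hπ x)
      mul_max_le := hf.mul_max_le }
  obtain ⟨α, hα₀, hα⟩ := hg.exists_eq_forall_mem_Icc_hasDerivWithinAt₀
  have hmem : ∀ t ∈ Icc tmin tmax, α t ∈ closedBall x₀ a := by
    intro t ht
    rw [mem_closedBall, dist_eq_norm, ← hα₀]
    calc ‖α t - α t₀‖ ≤ L * ‖t - t₀‖ :=
          (convex_Icc _ _).norm_image_sub_le_of_norm_hasDerivWithin_le hα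
            (fun s hs => hf.norm_le s hs _ (hπ _)) t₀.2 ht
      _ ≤ L * max (tmax - t₀) (t₀ - tmin) := by
          gcongr
          exact abs_sub_le_max_sub ht.1 ht.2 _
      _ ≤ a := by simpa using hf.mul_max_le
  exact ⟨α, hα₀, fun t ht => ⟨by simpa only [hπ_eq _ (hmem t ht)] using hα t ht, hmem t ht⟩⟩

end IsPicardLindelof

theorem ContinuousOn.hasDerivWithinAt_integral_Icc {E : Type*} [NormedAddCommGroup E]
    [NormedSpace ℝ E] [CompleteSpace E] {g : ℝ → E} {a b r : ℝ}
    (hg : ContinuousOn g (Icc a b)) (hr : r ∈ Icc a b) :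
    HasDerivWithinAt (fun u => ∫ x in a..u, g x) (g r) (Icc a b) r := by
  have : Fact (r ∈ Icc a b) := ⟨hr⟩
  exact intervalIntegral.integral_hasDerivWithinAt_right
    (hg.mono (uIcc_subset_Icc (left_mem_Icc.2 (hr.1.trans hr.2)) hr)).intervalIntegrable
    (hg.stronglyMeasurableAtFilter_nhdsWithin measurableSet_Icc r) (hg r hr)

theorem HasDerivWithinAt.Ici_of_Icc {E : Type*} [NormedAddCommGroup E] [NormedSpace ℝ E]
    {f : ℝ → E} {f' : E} {a b t : ℝ}
    (hf : HasDerivWithinAt f f' (Icc a b) t) (ht : t ∈ Ico a b) :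
    HasDerivWithinAt f f' (Ici t) t :=
  hf.mono_of_mem_nhdsWithin (Icc_mem_nhdsGE_of_mem ht)

theorem ODE_solution_unique_of_lipschitzOnWith_closedBall {E : Type*} [NormedAddCommGroup E]
    [NormedSpace ℝ E] {v : ℝ → E → E} {f g : ℝ → E} {a b : ℝ}
    (hv : ∀ ρ, ∃ K, ∀ t, LipschitzOnWith K (v t) (closedBall 0 ρ))
    (hf : ∀ t ∈ Icc a b, HasDerivWithinAt f (v t (f t)) (Icc a b) t)
    (hg : ∀ t ∈ Icc a b, HasDerivWithinAt g (v t (g t)) (Icc a b) t)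
    (ha : f a = g a) : EqOn f g (Icc a b) := by
  have hfc : ContinuousOn f (Icc a b) := fun t ht => (hf t ht).continuousWithinAt
  have hgc : ContinuousOn g (Icc a b) := fun t ht => (hg t ht).continuousWithinAt
  obtain ⟨ρf, hρf⟩ := isCompact_Icc.exists_bound_of_continuousOn hfc
  obtain ⟨ρg, hρg⟩ := isCompact_Icc.exists_bound_of_continuousOn hgc
  obtain ⟨K, hK⟩ := hv (max ρf ρg)
  exact ODE_solution_unique_of_mem_Icc_right (fun t _ => hK t) hfc
    (fun t ht => (hf t (Ico_subset_Icc_self ht)).Ici_of_Icc ht)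
    (fun t ht => mem_closedBall_zero_iff.2
      ((hρf t (Ico_subset_Icc_self ht)).trans (le_max_left _ _)))
    hgc (fun t ht => (hg t (Ico_subset_Icc_self ht)).Ici_of_Icc ht)
    (fun t ht => mem_closedBall_zero_iff.2
      ((hρg t (Ico_subset_Icc_self ht)).trans (le_max_right _ _)))
    ha

/-- The equation as a first-order system in the state `p = (f, w)`, `w(r) = ∫₂^r 2(1 + f)`,
with `c = n - 1`. -/
noncomputable def matchingField (c τ lam : ℝ) (V : ℝ → ℝ) (t : ℝ) (p : ℝ × ℝ) : ℝ × ℝ :=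
  (2 / c * (V t - τ ^ 2 - c ^ 2 / 2 * p.1 - c ^ 2 / 4 * p.1 ^ 2 - lam * Real.exp (-p.2)),
    2 * (1 + p.1))

section matchingField

variable {c τ lam : ℝ} {V : ℝ → ℝ}

theorem matching_equation_iff (hc : c ≠ 0) (t f f' w : ℝ) :
    τ ^ 2 + c ^ 2 / 2 * f + c ^ 2 / 4 * f ^ 2 + c / 2 * f' + lam / Real.exp w = V t ↔
      f' = (matchingField c τ lam V t (f, w)).1 := by
  rw [matchingField, Real.exp_neg, ← div_eq_mul_inv]
  constructor <;> intro h
  · rw [← h]; field_simp; ring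
  · rw [h]; field_simp; ring

theorem exists_lipschitzOnWith_matchingField {s : Set (ℝ × ℝ)} (hs : IsCompact s)
    (hs' : Convex ℝ s) : ∃ K, ∀ t, LipschitzOnWith K (matchingField c τ lam V t) s := by
  set g : ℝ × ℝ → ℝ × ℝ := fun p =>
    (2 / c * (-(c ^ 2 / 2 * p.1) - c ^ 2 / 4 * p.1 ^ 2 - lam * Real.exp (-p.2)), 2 * (1 + p.1))
  obtain ⟨K, hK⟩ := (show ContDiff ℝ 1 g by fun_prop).contDiffOn.exists_lipschitzOnWith
    one_ne_zero hs' hs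
  refine ⟨0 + K, fun t => ?_⟩
  have hfg : matchingField c τ lam V t = fun p => (2 / c * (V t - τ ^ 2), (0 : ℝ)) + g p := by
    ext p <;> simp only [matchingField, g, Prod.fst_add, Prod.snd_add] <;> ring
  rw [hfg]
  exact (LipschitzWith.const _).lipschitzOnWith.add hK

theorem continuousOn_matchingField {s : Set ℝ} (hV : ContinuousOn V s) {Y : ℝ → ℝ × ℝ}
    (hY : ContinuousOn Y s) : ContinuousOn (fun t => matchingField c τ lam V t (Y t)) s := by
  unfold matchingField
  fun_prop

theorem norm_matchingField_le {M w₀ t : ℝ} {p : ℝ × ℝ} (hc : 1 ≤ c) (hlam : 0 ≤ lam)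
    (hV : |V t| ≤ M) (hw₀ : 1 / 4 ≤ w₀) (hp : p ∈ closedBall ((1 : ℝ), w₀) (1 / 4)) :
    ‖matchingField c τ lam V t p‖ ≤ 2 * (M + τ ^ 2 + lam) + 3 * c + 5 := by
  rw [mem_closedBall, Prod.dist_eq, max_le_iff, Real.dist_eq, Real.dist_eq, abs_le, abs_le] at hp
  obtain ⟨⟨hp₁, hp₁'⟩, ⟨hp₂, -⟩⟩ := hp
  simp only at hp₁ hp₁' hp₂
  have hexp : Real.exp (-p.2) ≤ 1 := Real.exp_le_one_iff.2 (by linarith)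
  have hexp₀ := Real.exp_pos (-p.2)
  obtain ⟨hV₁, hV₂⟩ := abs_le.1 hV
  have hA : 0 ≤ M + τ ^ 2 + lam := by nlinarith [abs_nonneg (V t), sq_nonneg τ]
  have hX : |V t - τ ^ 2 - c ^ 2 / 2 * p.1 - c ^ 2 / 4 * p.1 ^ 2 - lam * Real.exp (-p.2)|
      ≤ (M + τ ^ 2 + lam) + 65 / 64 * c ^ 2 := by
    have h₁ : 0 ≤ c ^ 2 / 2 * p.1 := by nlinarith
    have h₂ : c ^ 2 / 2 * p.1 ≤ 5 / 8 * c ^ 2 := by nlinarith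
    have h₃ : c ^ 2 / 4 * p.1 ^ 2 ≤ 25 / 64 * c ^ 2 := by nlinarith
    have h₄ : lam * Real.exp (-p.2) ≤ lam := by nlinarith
    rw [abs_le]; constructor <;> nlinarith [sq_nonneg τ, sq_nonneg p.1, mul_nonneg hlam hexp₀.le]
  rw [Prod.norm_def, max_le_iff, Real.norm_eq_abs, Real.norm_eq_abs, matchingField, abs_mul,
    abs_of_pos (by positivity : (0 : ℝ) < 2 / c)]
  constructor
  · calc 2 / c * |V t - τ ^ 2 - c ^ 2 / 2 * p.1 - c ^ 2 / 4 * p.1 ^ 2 - lam * Real.exp (-p.2)|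
        ≤ 2 / c * ((M + τ ^ 2 + lam) + 65 / 64 * c ^ 2) := by gcongr
      _ = 2 * (M + τ ^ 2 + lam) / c + 65 / 32 * c := by field_simp; ring
      _ ≤ 2 * (M + τ ^ 2 + lam) + 3 * c + 5 := by
          have := div_le_self (by positivity : 0 ≤ 2 * (M + τ ^ 2 + lam)) hc
          nlinarith
  · rw [abs_of_nonneg (by linarith)]
    nlinarith

theorem exists_isPicardLindelof_matchingField {M t₀ t₁ w₀ : ℝ} (hc : 1 ≤ c) (hlam : 0 ≤ lam)
    (hM : 0 ≤ M) (hV : ContinuousOn V (Icc t₀ t₁)) (hVM : ∀ t ∈ Icc t₀ t₁, |V t| ≤ M)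
    (hw₀ : 1 / 4 ≤ w₀) (ht : t₀ ≤ t₁)
    (htime : (2 * (M + τ ^ 2 + lam) + 3 * c + 5) * (t₁ - t₀) ≤ 1 / 4) :
    ∃ K, IsPicardLindelof (matchingField c τ lam V) (⟨t₀, left_mem_Icc.2 ht⟩ : Icc t₀ t₁)
      ((1 : ℝ), w₀) (1 / 4) 0 (2 * (M + τ ^ 2 + lam) + 3 * c + 5).toNNReal K := by
  obtain ⟨K, hK⟩ := exists_lipschitzOnWith_matchingField (c := c) (τ := τ) (lam := lam) (V := V)
    (isCompact_closedBall ((1 : ℝ), w₀) (1 / 4)) (convex_closedBall _ _)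
  refine ⟨K, fun t _ => hK t, fun p _ => continuousOn_matchingField hV continuousOn_const,
    fun t ht p hp => ?_, ?_⟩
  · exact (norm_matchingField_le hc hlam (hVM t ht) hw₀ (by simpa using hp)).trans
      (Real.le_coe_toNNReal _)
  · rw [Real.coe_toNNReal _ (by positivity)]
    simpa [ht] using htime

end matchingField

section exponentIntegral

variable {G : ℝ → ℝ} {t₀ t₁ : ℝ}

theorem integral_eq_of_eq_one (ht₀ : 2 ≤ t₀) (hG1 : ∀ r, 2 ≤ r → r ≤ t₀ → G r = 1) :
    ∫ x in (2 : ℝ)..t₀, 2 * (1 + G x) = 4 * (t₀ - 2) := by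
  rw [intervalIntegral.integral_congr (g := fun _ => (4 : ℝ)) fun x hx => ?_]
  · simp only [intervalIntegral.integral_const, smul_eq_mul]; ring
  · rw [uIcc_of_le ht₀] at hx
    simp only [hG1 x hx.1 hx.2]; norm_num

theorem hasDerivWithinAt_integral_of_eq_one {r : ℝ} (ht₀ : 2 ≤ t₀)
    (hG1 : ∀ r, 2 ≤ r → r ≤ t₀ → G r = 1) (hG : ContinuousOn G (Icc t₀ t₁))
    (hr : r ∈ Icc t₀ t₁) :
    HasDerivWithinAt (fun u => ∫ x in (2 : ℝ)..u, 2 * (1 + G x)) (2 * (1 + G r))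
      (Icc t₀ t₁) r := by
  have hG' : ContinuousOn G (Icc 2 t₁) := by
    rw [← Icc_union_Icc_eq_Icc ht₀ (hr.1.trans hr.2)]
    exact (continuousOn_const.congr fun x hx => hG1 x hx.1 hx.2).union_of_isClosed hG
      isClosed_Icc isClosed_Icc
  exact ((continuousOn_const.mul (continuousOn_const.add hG')).hasDerivWithinAt_integral_Icc
    ⟨ht₀.trans hr.1, hr.2⟩).mono (Icc_subset_Icc_left ht₀)

end exponentIntegral

section solution

variable {c τ lam : ℝ} {V F F' G G' : ℝ → ℝ} {t₀ t₁ : ℝ}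

theorem hasDerivWithinAt_matchingField_of_solution (hc : c ≠ 0) (ht₀ : 2 ≤ t₀)
    (hG1 : ∀ r, 2 ≤ r → r ≤ t₀ → G r = 1)
    (hGd : ∀ r ∈ Icc t₀ t₁, HasDerivWithinAt G (G' r) (Icc t₀ t₁) r)
    (hGeq : ∀ r ∈ Icc t₀ t₁, τ ^ 2 + c ^ 2 / 2 * G r + c ^ 2 / 4 * G r ^ 2 + c / 2 * G' r
      + lam / Real.exp (∫ x in (2 : ℝ)..r, 2 * (1 + G x)) = V r)
    {r : ℝ} (hr : r ∈ Icc t₀ t₁) :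
    HasDerivWithinAt (fun r => (G r, ∫ x in (2 : ℝ)..r, 2 * (1 + G x)))
      (matchingField c τ lam V r (G r, ∫ x in (2 : ℝ)..r, 2 * (1 + G x))) (Icc t₀ t₁) r := by
  have hGc : ContinuousOn G (Icc t₀ t₁) := fun s hs => (hGd s hs).continuousWithinAt
  convert (hGd r hr).prodMk (hasDerivWithinAt_integral_of_eq_one ht₀ hG1 hGc hr) using 1
  exact Prod.ext ((matching_equation_iff hc _ _ _ _).1 (hGeq r hr)).symm rfl

theorem matching_solution_unique (hc : c ≠ 0) (ht₀ : 2 ≤ t₀)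
    (hG1 : ∀ r, 2 ≤ r → r ≤ t₀ → G r = 1)
    (hGd : ∀ r ∈ Icc t₀ t₁, HasDerivWithinAt G (G' r) (Icc t₀ t₁) r)
    (hGeq : ∀ r ∈ Icc t₀ t₁, τ ^ 2 + c ^ 2 / 2 * G r + c ^ 2 / 4 * G r ^ 2 + c / 2 * G' r
      + lam / Real.exp (∫ x in (2 : ℝ)..r, 2 * (1 + G x)) = V r)
    (hF1 : ∀ r, 2 ≤ r → r ≤ t₀ → F r = 1)
    (hFd : ∀ r ∈ Icc t₀ t₁, HasDerivWithinAt F (F' r) (Icc t₀ t₁) r)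
    (hFeq : ∀ r ∈ Icc t₀ t₁, τ ^ 2 + c ^ 2 / 2 * F r + c ^ 2 / 4 * F r ^ 2 + c / 2 * F' r
      + lam / Real.exp (∫ x in (2 : ℝ)..r, 2 * (1 + F x)) = V r) :
    ∀ r ∈ Icc t₀ t₁, G r = F r := fun r hr =>
  congrArg Prod.fst <| ODE_solution_unique_of_lipschitzOnWith_closedBall
    (fun ρ => exists_lipschitzOnWith_matchingField (isCompact_closedBall 0 ρ)
      (convex_closedBall 0 ρ))
    (fun s hs => hasDerivWithinAt_matchingField_of_solution hc ht₀ hG1 hGd hGeq hs)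
    (fun s hs => hasDerivWithinAt_matchingField_of_solution hc ht₀ hF1 hFd hFeq hs)
    (by rw [integral_eq_of_eq_one ht₀ hG1, integral_eq_of_eq_one ht₀ hF1,
      hG1 _ ht₀ le_rfl, hF1 _ ht₀ le_rfl]) hr

theorem integral_eq_snd_of_trajectory {Y : ℝ → ℝ × ℝ} (ht₀ : 2 ≤ t₀)
    (hY₀ : Y t₀ = (1, 4 * (t₀ - 2)))
    (hY : ∀ r ∈ Icc t₀ t₁, HasDerivWithinAt Y (matchingField c τ lam V r (Y r)) (Icc t₀ t₁) r)
    (hG1 : ∀ r, 2 ≤ r → r ≤ t₀ → G r = 1) (hGY : ∀ r ∈ Icc t₀ t₁, G r = (Y r).1) :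
    ∀ r ∈ Icc t₀ t₁, ∫ x in (2 : ℝ)..r, 2 * (1 + G x) = (Y r).2 := by
  have hY₂ : ∀ r ∈ Icc t₀ t₁,
      HasDerivWithinAt (fun s => (Y s).2) (2 * (1 + G r)) (Icc t₀ t₁) r := fun r hr => by
    rw [hGY r hr]
    exact hasFDerivAt_snd.comp_hasDerivWithinAt r (hY r hr)
  have hGc : ContinuousOn G (Icc t₀ t₁) := fun r hr =>
    ((hasFDerivAt_fst.comp_hasDerivWithinAt r (hY r hr)).continuousWithinAt).congr hGY (hGY r hr)
  exact eq_of_has_deriv_right_eq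
    (fun r hr => (hasDerivWithinAt_integral_of_eq_one ht₀ hG1 hGc
      (Ico_subset_Icc_self hr)).Ici_of_Icc hr)
    (fun r hr => (hY₂ r (Ico_subset_Icc_self hr)).Ici_of_Icc hr)
    (fun r hr => (hasDerivWithinAt_integral_of_eq_one ht₀ hG1 hGc hr).continuousWithinAt)
    (fun r hr => (hY₂ r hr).continuousWithinAt)
    (by rw [integral_eq_of_eq_one ht₀ hG1, hY₀])

theorem exists_matching_solution {M : ℝ} (hc : 1 ≤ c) (hlam : 0 ≤ lam) (hM : 0 ≤ M)
    (ht₀ : 2 + 1 / 16 ≤ t₀) (ht : t₀ ≤ t₁) (hV : ContinuousOn V (Icc t₀ t₁))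
    (hVM : ∀ t ∈ Icc t₀ t₁, |V t| ≤ M)
    (htime : (2 * (M + τ ^ 2 + lam) + 3 * c + 5) * (t₁ - t₀) ≤ 1 / 4) :
    ∃ F F' : ℝ → ℝ,
      (∀ r, 2 ≤ r → r ≤ t₀ → F r = 1) ∧
      (∀ r ∈ Icc t₀ t₁, HasDerivWithinAt F (F' r) (Icc t₀ t₁) r) ∧
      ContinuousOn F' (Icc t₀ t₁) ∧
      (∀ r ∈ Icc t₀ t₁, τ ^ 2 + c ^ 2 / 2 * F r + c ^ 2 / 4 * F r ^ 2 + c / 2 * F' r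
        + lam / Real.exp (∫ x in (2 : ℝ)..r, 2 * (1 + F x)) = V r) ∧
      (∀ r ∈ Icc t₀ t₁, |F r - 1| ≤ 1 / 4) := by
  obtain ⟨K, hPL⟩ := exists_isPicardLindelof_matchingField hc hlam hM hV hVM
    (show 1 / 4 ≤ 4 * (t₀ - 2) by linarith) ht htime
  obtain ⟨Y, hY₀, hY⟩ := hPL.exists_eq_forall_mem_Icc_hasDerivWithinAt_mem_closedBall
  set F : ℝ → ℝ := fun r => if r ≤ t₀ then 1 else (Y r).1
  have hF1 : ∀ r, 2 ≤ r → r ≤ t₀ → F r = 1 := fun r _ h => if_pos h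
  have hFY : ∀ r ∈ Icc t₀ t₁, F r = (Y r).1 := fun r hr => by
    rcases hr.1.eq_or_lt with h | h
    · subst h; simp [F, hY₀]
    · exact if_neg h.not_ge
  refine ⟨F, fun r => (matchingField c τ lam V r (Y r)).1, hF1,
    fun r hr => (hasFDerivAt_fst.comp_hasDerivWithinAt r (hY r hr).1).congr_of_mem hFY hr,
    (continuousOn_matchingField hV fun r hr => (hY r hr).1.continuousWithinAt).fst,
    fun r hr => ?_, fun r hr => ?_⟩
  · rw [matching_equation_iff (by linarith), hFY r hr,
      integral_eq_snd_of_trajectory (by linarith) hY₀ (fun s hs => (hY s hs).1) hF1 hFY r hr]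
  · have h := (hY r hr).2
    rw [mem_closedBall, Prod.dist_eq, max_le_iff, Real.dist_eq] at h
    simpa [hFY r hr] using h.1

end solution

theorem stmt12_general (n : ℕ) (hn : 2 ≤ n) (τ lamI b M : ℝ)
    (hlam : 0 < lamI) (hb : 10 ≤ b) (hM : 0 < M)
    (V : ℝ → ℝ) (hVc : ContinuousOn V (Ioi 0))
    (hVb : ∀ r ∈ Icc (b - 1) (b + 1), |V r| ≤ M) :
    ∃ δ₀ : ℝ, 0 < δ₀ ∧ δ₀ < 1 / 2 ∧ ∀ δ : ℝ, 0 < δ → δ ≤ δ₀ →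
      ∃ F F' : ℝ → ℝ,
        (∀ r, 2 ≤ r → r ≤ b - δ → F r = 1) ∧
        (∀ r ∈ Icc (b - δ) (b + δ), HasDerivWithinAt F (F' r) (Icc (b - δ) (b + δ)) r) ∧
        ContinuousOn F' (Icc (b - δ) (b + δ)) ∧
        (∀ r ∈ Icc (b - δ) (b + δ),
          τ ^ 2 + ((n : ℝ) - 1) ^ 2 / 2 * F r + ((n : ℝ) - 1) ^ 2 / 4 * (F r) ^ 2
            + ((n : ℝ) - 1) / 2 * F' r
            + lamI / Real.exp (∫ x in (2 : ℝ)..r, 2 * (1 + F x)) = V r) ∧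
        (∀ r ∈ Icc (b - δ) (b + δ), 1 / 2 < F r ∧ F r < 2) ∧
        (∀ G G' : ℝ → ℝ,
          (∀ r, 2 ≤ r → r ≤ b - δ → G r = 1) →
          (∀ r ∈ Icc (b - δ) (b + δ), HasDerivWithinAt G (G' r) (Icc (b - δ) (b + δ)) r) →
          ContinuousOn G' (Icc (b - δ) (b + δ)) →
          (∀ r ∈ Icc (b - δ) (b + δ),
            τ ^ 2 + ((n : ℝ) - 1) ^ 2 / 2 * G r + ((n : ℝ) - 1) ^ 2 / 4 * (G r) ^ 2
              + ((n : ℝ) - 1) / 2 * G' r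
              + lamI / Real.exp (∫ x in (2 : ℝ)..r, 2 * (1 + G x)) = V r) →
          ∀ r ∈ Icc (b - δ) (b + δ), G r = F r) := by
  have hc : (1 : ℝ) ≤ (n : ℝ) - 1 := by
    have : (2 : ℝ) ≤ n := by exact_mod_cast hn
    linarith
  set C := 2 * (M + τ ^ 2 + lamI) + 3 * ((n : ℝ) - 1) + 5
  have hC : 0 < C := by positivity
  refine ⟨min (1 / 4) (1 / (8 * C)), by positivity, (min_le_left _ _).trans_lt (by norm_num),
    fun δ hδ hδ₀ => ?_⟩
  have hδ₁ : δ ≤ 1 / 4 := hδ₀.trans (min_le_left _ _)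
  have htime : C * (b + δ - (b - δ)) ≤ 1 / 4 := by
    have := hδ₀.trans (min_le_right _ _)
    rw [le_div_iff₀ (by positivity)] at this
    linarith
  obtain ⟨F, F', hF1, hFd, hF'c, hFeq, hFbd⟩ := exists_matching_solution hc hlam.le hM.le
    (by linarith) (by linarith) (hVc.mono fun r hr => show 0 < r by linarith [hr.1])
    (fun t ht => hVb t ⟨by linarith [ht.1], by linarith [ht.2]⟩) htime
  refine ⟨F, F', hF1, hFd, hF'c, hFeq, fun r hr => ?_, fun G G' hG1 hGd _ hGeq =>
    matching_solution_unique (by linarith) (by linarith) hG1 hGd hGeq hF1 hFd hFeq⟩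
  obtain ⟨h₁, h₂⟩ := abs_le.1 (hFbd r hr)
  constructor <;> linarith

/-- Local well-posedness, with quantitative bounds, of the curvature-matching
ODE at the matching point `b`. -/
theorem stmt12 (n : ℕ) (hn : 2 ≤ n) (τ lamI b M : ℝ) (hτ : 0 ≤ τ)
    (hlam : 0 < lamI) (hb : 10 ≤ b) (hM : 0 < M)
    (V : ℝ → ℝ) (hVc : ContinuousOn V (Ioi 0))
    (hVb : ∀ r ∈ Icc (b - 1) (b + 1), |V r| ≤ M) :
    ∃ δ₀ : ℝ, 0 < δ₀ ∧ δ₀ < 1 / 2 ∧ ∀ δ : ℝ, 0 < δ → δ ≤ δ₀ →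
      ∃ F F' : ℝ → ℝ,
        (∀ r, 2 ≤ r → r ≤ b - δ → F r = 1) ∧
        (∀ r ∈ Icc (b - δ) (b + δ), HasDerivWithinAt F (F' r) (Icc (b - δ) (b + δ)) r) ∧
        ContinuousOn F' (Icc (b - δ) (b + δ)) ∧
        (∀ r ∈ Icc (b - δ) (b + δ),
          τ ^ 2 + ((n : ℝ) - 1) ^ 2 / 2 * F r + ((n : ℝ) - 1) ^ 2 / 4 * (F r) ^ 2
            + ((n : ℝ) - 1) / 2 * F' r
            + lamI / Real.exp (∫ x in (2 : ℝ)..r, 2 * (1 + F x)) = V r) ∧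
        (∀ r ∈ Icc (b - δ) (b + δ), 1 / 2 < F r ∧ F r < 2) ∧
        (∀ G G' : ℝ → ℝ,
          (∀ r, 2 ≤ r → r ≤ b - δ → G r = 1) →
          (∀ r ∈ Icc (b - δ) (b + δ), HasDerivWithinAt G (G' r) (Icc (b - δ) (b + δ)) r) →
          ContinuousOn G' (Icc (b - δ) (b + δ)) →
          (∀ r ∈ Icc (b - δ) (b + δ),
            τ ^ 2 + ((n : ℝ) - 1) ^ 2 / 2 * G r + ((n : ℝ) - 1) ^ 2 / 4 * (G r) ^ 2
              + ((n : ℝ) - 1) / 2 * G' r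
              + lamI / Real.exp (∫ x in (2 : ℝ)..r, 2 * (1 + G x)) = V r) →
          ∀ r ∈ Icc (b - δ) (b + δ), G r = F r) :=
  stmt12_general n hn τ lamI b M hlam hb hM V hVc hVb
end
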